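/- arXiv:1711.07690 — 11 statements merged into one kernel-verified Lean document; each statement's English description precedes it below -/
import Mathlib

section
/- Let Ω be a nonempty open subset of ℝ^{n+1} (n ≥ 1) with nonempty topological boundary ∂Ω, and let u(y) = dist(y, ∂Ω). Let 0 < s < t, let x ∈ ∂Ω and z ∈ Ω satisfy u(z) = ‖x − z‖ = t, and set y = x + (s/t)(z − x). Then: (i) the open ball B_{t−s}(z) is contained in Ω_s = {u > s}; (ii) Ω_s is disjoint from the closed ball B̄_s(x); (iii) u(y) = s, ‖y − x‖ = s and ‖y − z‖ = t − s, so that y is the unique point of ∂B_{t−s}(z) ∩ ∂B_s(x); and (iv) x is the unique point of ∂Ω at distance u(y) = s from y. -/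
open RealInnerProductSpace Metric Set

/-!
The ball `B_t(z)` does not meet `∂Ω`, so being connected and containing `z ∈ Ω` it lies in `Ω`;
the 1-Lipschitz bound `u z ≤ u w + ‖z - w‖` then gives the interior ball, and `u w ≤ ‖w - x‖`
the exterior one. Since `y` lies on the segment `[x, z]`, the same two bounds squeeze `u y` to `s`.
Both uniqueness claims are equality cases of the triangle inequality, which in a strictly convex
space force the three points onto one line.
-/

theorem IsPreconnected.subset_interior_of_disjoint_frontier {X : Type*} [TopologicalSpace X]
    {s Ω : Set X} (hs : IsPreconnected s) (hsΩ : Disjoint s (frontier Ω))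
    (hne : (s ∩ Ω).Nonempty) : s ⊆ interior Ω := by
  have hcover : s ⊆ interior Ω ∪ (closure Ω)ᶜ := fun w hw => by
    by_contra h
    simp only [mem_union, mem_compl_iff, not_or, not_not] at h
    exact hsΩ.notMem_of_mem_left hw ⟨h.2, h.1⟩
  obtain ⟨w, hws, hwΩ⟩ := hne
  refine hs.subset_left_of_subset_union isOpen_interior isClosed_closure.isOpen_compl
    (disjoint_compl_right.mono interior_subset_closure le_rfl) hcover ⟨w, hws, ?_⟩
  exact (hcover hws).resolve_right (not_not_intro (subset_closure hwΩ))

theorem ball_infDist_frontier_subset_interior {E : Type*} [NormedAddCommGroup E]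
    [NormedSpace ℝ E] {Ω : Set E} {z : E} (hz : z ∈ Ω) :
    ball z (infDist z (frontier Ω)) ⊆ interior Ω := by
  rcases (ball z (infDist z (frontier Ω))).eq_empty_or_nonempty with h | h
  · simp [h]
  exact (convex_ball _ _).isPreconnected.subset_interior_of_disjoint_frontier
    (subset_compl_iff_disjoint_right.mp ball_infDist_subset_compl)
    ⟨z, mem_ball_self (nonempty_ball.mp h), hz⟩

section InfDist

variable {α : Type*} [PseudoMetricSpace α] {F : Set α} {w x y z : α} {s t : ℝ}

theorem lt_infDist_of_mem_ball (hz : t ≤ infDist z F) (hw : w ∈ ball z (t - s)) :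
    s < infDist w F := by
  rw [mem_ball'] at hw
  linarith [infDist_le_infDist_add_dist (x := z) (y := w) (s := F)]

theorem infDist_eq_dist_of_infDist_eq_add (hx : x ∈ F) (hz : infDist z F = dist z y + dist y x) :
    infDist y F = dist y x :=
  le_antisymm (infDist_le_dist_of_mem hx)
    (by linarith [infDist_le_infDist_add_dist (x := z) (y := y) (s := F)])

end InfDist

theorem eq_of_dist_add_dist_eq_of_dist_eq {E : Type*} [NormedAddCommGroup E] [NormedSpace ℝ E]
    [StrictConvexSpace ℝ E] {a y b b' : E} (hay : a ≠ y)
    (hb : dist a y + dist y b = dist a b) (hb' : dist a y + dist y b' = dist a b')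
    (hd : dist y b = dist y b') : b = b' := by
  have ray {c : E} (hc : dist a y + dist y c = dist a c) :
      ‖a - y‖ • (y - c) = dist y c • (a - y) := by
    have : ‖(a - y) + (y - c)‖ = ‖a - y‖ + ‖y - c‖ := by
      simpa only [sub_add_sub_cancel, dist_eq_norm] using hc.symm
    simpa only [dist_eq_norm] using (sameRay_iff_norm_add.mpr this).norm_smul_eq
  have h : ‖a - y‖ • (y - b) = ‖a - y‖ • (y - b') := by rw [ray hb, ray hb', hd]
  simpa using smul_right_injective E (norm_ne_zero_iff.mpr (sub_ne_zero.mpr hay)) h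

theorem stmt_5_general (n : ℕ)
    (Ω : Set (EuclideanSpace ℝ (Fin (n + 1))))
    (u : EuclideanSpace ℝ (Fin (n + 1)) → ℝ)
    (hu : ∀ y, u y = Metric.infDist y (frontier Ω))
    (s t : ℝ) (hs : 0 < s) (hst : s < t)
    (x z y : EuclideanSpace ℝ (Fin (n + 1)))
    (hx : x ∈ frontier Ω) (hz : z ∈ Ω) (huz : u z = t) (hxz : ‖x - z‖ = t)
    (hy : y = x + (s / t) • (z - x)) :
    Metric.ball z (t - s) ⊆ {w | w ∈ Ω ∧ s < u w} ∧
    Disjoint {w | w ∈ Ω ∧ s < u w} (Metric.closedBall x s) ∧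
    (u y = s ∧ ‖y - x‖ = s ∧ ‖y - z‖ = t - s ∧
      ∀ w : EuclideanSpace ℝ (Fin (n + 1)),
        w ∈ Metric.sphere z (t - s) → w ∈ Metric.sphere x s → w = y) ∧
    (∀ x' ∈ frontier Ω, ‖y - x'‖ = s → x' = x) := by
  have ht : 0 < t := hs.trans hst
  simp only [hu] at huz ⊢
  have hdxz : dist x z = t := by rwa [dist_eq_norm]
  replace hy : y = AffineMap.lineMap x z (s / t) := by
    rw [hy, AffineMap.lineMap_apply_module']; abel
  have hyx : dist y x = s := by
    rw [hy, dist_lineMap_left, hdxz, Real.norm_of_nonneg (by positivity)]; field_simp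
  have hyz : dist y z = t - s := by
    have : 0 ≤ 1 - s / t := by rw [sub_nonneg, div_le_one ht]; linarith
    rw [hy, dist_lineMap_right, hdxz, Real.norm_of_nonneg this]
    field_simp
  have hzyx : dist z y + dist y x = dist z x := by rw [dist_comm z, hyz, hyx, dist_comm, hdxz]; ring
  refine ⟨fun w hw => ⟨?_, lt_infDist_of_mem_ball huz.ge hw⟩, ?_, ⟨?_, ?_, ?_, ?_⟩, ?_⟩
  · refine interior_subset (ball_infDist_frontier_subset_interior hz (ball_subset_ball ?_ hw))
    linarith
  · exact disjoint_left.mpr fun w hw hwx =>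
      (hw.2.trans_le (infDist_le_dist_of_mem hx)).not_ge (mem_closedBall.mp hwx)
  · rw [infDist_eq_dist_of_infDist_eq_add hx (by rw [huz, hzyx, dist_comm, hdxz]), hyx]
  · rwa [← dist_eq_norm]
  · rwa [← dist_eq_norm]
  · intro w hwz hwx
    rw [mem_sphere] at hwz hwx
    rw [hy]
    refine eq_lineMap_of_dist_eq_mul_of_dist_eq_mul ?_ ?_ <;> rw [hdxz] <;> field_simp
    · rw [dist_comm, hwx]
    · rw [hwz]
  · intro x' hx' hyx'
    rw [← dist_eq_norm] at hyx'
    have hzx' : dist z y + dist y x' = dist z x' := by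
      refine le_antisymm ?_ (dist_triangle _ _ _)
      linarith [infDist_le_dist_of_mem (x := z) hx', dist_comm z y]
    refine eq_of_dist_add_dist_eq_of_dist_eq ?_ hzx' hzyx (hyx'.trans hyx.symm)
    rw [← dist_pos, dist_comm, hyz]; linarith

/-- Tangent-ball properties at a point `y = x + (s/t)(z - x)` of `Γ_s^t`:
interior ball `B_{t-s}(z) ⊆ Ω_s`, exterior ball `Ω_s ∩ B̄_s(x) = ∅`,
`u(y) = s`, `‖y - x‖ = s`, `‖y - z‖ = t - s`, `y` is the unique point of
`∂B_{t-s}(z) ∩ ∂B_s(x)`, and `x` is the unique point of `∂Ω` at distance `s` from `y`. -/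
theorem stmt_5 (n : ℕ) (hn : 1 ≤ n)
    (Ω : Set (EuclideanSpace ℝ (Fin (n + 1))))
    (hΩopen : IsOpen Ω) (hΩne : Ω.Nonempty) (hfr : (frontier Ω).Nonempty)
    (u : EuclideanSpace ℝ (Fin (n + 1)) → ℝ)
    (hu : ∀ y, u y = Metric.infDist y (frontier Ω))
    (s t : ℝ) (hs : 0 < s) (hst : s < t)
    (x z y : EuclideanSpace ℝ (Fin (n + 1)))
    (hx : x ∈ frontier Ω) (hz : z ∈ Ω) (huz : u z = t) (hxz : ‖x - z‖ = t)
    (hy : y = x + (s / t) • (z - x)) :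
    Metric.ball z (t - s) ⊆ {w | w ∈ Ω ∧ s < u w} ∧
    Disjoint {w | w ∈ Ω ∧ s < u w} (Metric.closedBall x s) ∧
    (u y = s ∧ ‖y - x‖ = s ∧ ‖y - z‖ = t - s ∧
      ∀ w : EuclideanSpace ℝ (Fin (n + 1)),
        w ∈ Metric.sphere z (t - s) → w ∈ Metric.sphere x s → w = y) ∧
    (∀ x' ∈ frontier Ω, ‖y - x'‖ = s → x' = x) :=
  stmt_5_general n Ω u hu s t hs hst x z y hx hz huz hxz hy
end

section
/- Let Ω be a nonempty open subset of ℝ^{n+1} (n ≥ 1) with nonempty topological boundary ∂Ω, and let u(y) = dist(y, ∂Ω). Let t > 0 and let (x, z) and (x′, z′) be two configurations: x, x′ ∈ ∂Ω, z, z′ ∈ Ω, u(z) = ‖x − z‖ = t and u(z′) = ‖x′ − z′‖ = t. For 0 < a ≤ b ≤ t set y_a = x + (a/t)(z − x), y′_a = x′ + (a/t)(z′ − x′), and similarly y_b, y′_b. Then ‖y_b − y′_b‖ ≤ (b/a) ‖y_a − y′_a‖. In other words, the map flowing points of ∂Ω_a outward along their minimizing segments to ∂Ω_b is (b/a)-Lipschitz.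 -/
/-!
Write `w = x - x'` and `d = (z - x) - (z' - x')`, so that `y_c - y'_c = w + (c/t) d`.
Since the open balls `B(z, t)` and `B(z', t)` contain no boundary point, `x'` lies outside
the first and `x` outside the second; expanding these two inequalities gives
`⟪w, d⟫ ≥ -‖w‖²`. Under this condition `λ ↦ ‖λ w + d‖²` is nondecreasing on `[1, ∞)`, and
`‖w + r d‖ = r ‖r⁻¹ w + d‖` turns this into the `(b/a)`-Lipschitz bound.
-/

open RealInnerProductSpace Metric Set

section InnerProductSpace

variable {E : Type*} [NormedAddCommGroup E] [InnerProductSpace ℝ E]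

lemma neg_norm_sq_le_inner_sub_of_le_norm {x z x' z' : E} {t : ℝ}
    (hz : ‖z - x‖ = t) (hz' : ‖z' - x'‖ = t) (h : t ≤ ‖z - x'‖) (h' : t ≤ ‖z' - x‖) :
    -‖x - x'‖ ^ 2 ≤ ⟪x - x', (z - x) - (z' - x')⟫ := by
  have ht : 0 ≤ t := hz ▸ norm_nonneg _
  have hsq : t ^ 2 ≤ ‖(x - x') + (z - x)‖ ^ 2 := by
    rw [show (x - x') + (z - x) = z - x' by abel]; gcongr
  have hsq' : t ^ 2 ≤ ‖(z' - x') - (x - x')‖ ^ 2 := by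
    rw [show (z' - x') - (x - x') = z' - x by abel]; gcongr
  rw [norm_add_sq_real, hz] at hsq
  rw [norm_sub_sq_real, hz', real_inner_comm] at hsq'
  rw [inner_sub_right]
  linarith

lemma norm_smul_add_le_norm_smul_add {w d : E} (h : -‖w‖ ^ 2 ≤ ⟪w, d⟫) {l m : ℝ}
    (hl : 1 ≤ l) (hlm : l ≤ m) : ‖l • w + d‖ ≤ ‖m • w + d‖ := by
  rw [← sq_le_sq₀ (norm_nonneg _) (norm_nonneg _), norm_add_sq_real, norm_add_sq_real,
    norm_smul, norm_smul, real_inner_smul_left, real_inner_smul_left, Real.norm_eq_abs,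
    Real.norm_eq_abs, abs_of_pos (by linarith), abs_of_pos (by linarith)]
  have hgrowth : 0 ≤ (m + l) * ‖w‖ ^ 2 + 2 * ⟪w, d⟫ := by nlinarith [sq_nonneg ‖w‖]
  nlinarith [mul_nonneg (sub_nonneg.2 hlm) hgrowth]

lemma norm_add_smul_le_div_mul {w d : E} (h : -‖w‖ ^ 2 ≤ ⟪w, d⟫) {s r : ℝ}
    (hs : 0 < s) (hsr : s ≤ r) (hr : r ≤ 1) : ‖w + r • d‖ ≤ r / s * ‖w + s • d‖ := by
  have hr₀ : 0 < r := hs.trans_le hsr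
  have hscale : ∀ c : ℝ, 0 < c → ‖w + c • d‖ = c * ‖c⁻¹ • w + d‖ := fun c hc => by
    rw [← norm_smul_of_nonneg hc.le, smul_add, smul_smul, mul_inv_cancel₀ hc.ne', one_smul,
      add_comm]
  have hmono : ‖r⁻¹ • w + d‖ ≤ ‖s⁻¹ • w + d‖ :=
    norm_smul_add_le_norm_smul_add h (one_le_inv₀ hr₀ |>.2 hr) (inv_anti₀ hs hsr)
  rw [hscale r hr₀, hscale s hs, div_mul_eq_mul_div, mul_div_assoc, mul_div_cancel_left₀ _ hs.ne']
  gcongr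

end InnerProductSpace

theorem stmt_6_general (n : ℕ)
    (Ω : Set (EuclideanSpace ℝ (Fin (n + 1))))
    (u : EuclideanSpace ℝ (Fin (n + 1)) → ℝ)
    (hu : ∀ y, u y = Metric.infDist y (frontier Ω))
    (t : ℝ)
    (x z x' z' : EuclideanSpace ℝ (Fin (n + 1)))
    (hx : x ∈ frontier Ω) (huz : u z = t) (hxz : ‖x - z‖ = t)
    (hx' : x' ∈ frontier Ω) (huz' : u z' = t) (hxz' : ‖x' - z'‖ = t)
    (a b : ℝ) (ha : 0 < a) (hab : a ≤ b) (hbt : b ≤ t) :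
    ‖(x + (b / t) • (z - x)) - (x' + (b / t) • (z' - x'))‖ ≤
      (b / a) * ‖(x + (a / t) • (z - x)) - (x' + (a / t) • (z' - x'))‖ := by
  have ht : 0 < t := ha.trans_le (hab.trans hbt)
  have hfar : t ≤ ‖z - x'‖ := by
    rw [← huz, hu, ← dist_eq_norm]; exact infDist_le_dist_of_mem hx'
  have hfar' : t ≤ ‖z' - x‖ := by
    rw [← huz', hu, ← dist_eq_norm]; exact infDist_le_dist_of_mem hx
  have hinner := neg_norm_sq_le_inner_sub_of_le_norm
    (by rwa [norm_sub_rev]) (by rwa [norm_sub_rev]) hfar hfar'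
  have hdiff : ∀ c : ℝ, (x + c • (z - x)) - (x' + c • (z' - x')) =
      (x - x') + c • ((z - x) - (z' - x')) := fun c => by module
  rw [hdiff, hdiff, show b / a = (b / t) / (a / t) by field_simp]
  exact norm_add_smul_le_div_mul hinner (by positivity) (by gcongr) ((div_le_one ht).2 hbt)

/-- The map flowing points of `∂Ω_a` outward along their minimizing segments to
`∂Ω_b` is `(b/a)`-Lipschitz: for two configurations `(x, z)` and `(x', z')` at
level `t` and `0 < a ≤ b ≤ t`, `‖y_b − y′_b‖ ≤ (b/a) ‖y_a − y′_a‖`. -/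
theorem stmt_6 (n : ℕ) (hn : 1 ≤ n)
    (Ω : Set (EuclideanSpace ℝ (Fin (n + 1))))
    (hΩopen : IsOpen Ω) (hΩne : Ω.Nonempty) (hfr : (frontier Ω).Nonempty)
    (u : EuclideanSpace ℝ (Fin (n + 1)) → ℝ)
    (hu : ∀ y, u y = Metric.infDist y (frontier Ω))
    (t : ℝ)
    (x z x' z' : EuclideanSpace ℝ (Fin (n + 1)))
    (hx : x ∈ frontier Ω) (hz : z ∈ Ω) (huz : u z = t) (hxz : ‖x - z‖ = t)
    (hx' : x' ∈ frontier Ω) (hz' : z' ∈ Ω) (huz' : u z' = t) (hxz' : ‖x' - z'‖ = t)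
    (a b : ℝ) (ha : 0 < a) (hab : a ≤ b) (hbt : b ≤ t) :
    ‖(x + (b / t) • (z - x)) - (x' + (b / t) • (z' - x'))‖ ≤
      (b / a) * ‖(x + (a / t) • (z - x)) - (x' + (a / t) • (z' - x'))‖ :=
  stmt_6_general n Ω u hu t x z x' z' hx huz hxz hx' huz' hxz' a b ha hab hbt
end

section
/- Let Ω be a nonempty open subset of ℝ^{n+1} (n ≥ 1) with nonempty topological boundary ∂Ω, let u(y) = dist(y, ∂Ω), and let 0 < s < t. If a point y admits two configurations (x, z) and (x′, z′) — i.e. x, x′ ∈ ∂Ω, z, z′ ∈ Ω, u(z) = ‖x − z‖ = t, u(z′) = ‖x′ − z′‖ = t, and y = x + (s/t)(z − x) = x′ + (s/t)(z′ − x′) — then x = x′ and z = z′. Thus every y ∈ Γ_s^t has a unique configuration. -/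
open RealInnerProductSpace Metric Set

/-- Every point `y ∈ Γ_s^t` has a unique configuration: if
`y = x + (s/t)(z - x) = x' + (s/t)(z' - x')` for configurations `(x, z)` and
`(x', z')`, then `x = x'` and `z = z'`. -/
theorem stmt_7 (n : ℕ) (hn : 1 ≤ n)
    (Ω : Set (EuclideanSpace ℝ (Fin (n + 1))))
    (hΩopen : IsOpen Ω) (hΩne : Ω.Nonempty) (hfr : (frontier Ω).Nonempty)
    (u : EuclideanSpace ℝ (Fin (n + 1)) → ℝ)
    (hu : ∀ y, u y = Metric.infDist y (frontier Ω))
    (s t : ℝ) (hs : 0 < s) (hst : s < t)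
    (y x z x' z' : EuclideanSpace ℝ (Fin (n + 1)))
    (hx : x ∈ frontier Ω) (hz : z ∈ Ω) (huz : u z = t) (hxz : ‖x - z‖ = t)
    (hx' : x' ∈ frontier Ω) (hz' : z' ∈ Ω) (huz' : u z' = t) (hxz' : ‖x' - z'‖ = t)
    (hy : y = x + (s / t) • (z - x)) (hy' : y = x' + (s / t) • (z' - x')) :
    x = x' ∧ z = z' := by
  have ht : (0:ℝ) < t := hs.trans hst
  have hts : (0:ℝ) < t - s := sub_pos.2 hst
  have hzx : ‖z - x‖ = t := by rw [norm_sub_rev]; exact hxz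
  have hzx' : ‖z' - x'‖ = t := by rw [norm_sub_rev]; exact hxz'
  -- y - x' = (s/t) • (z' - x')
  have hyx' : y - x' = (s / t) • (z' - x') := by rw [hy']; abel
  have hyx : y - x = (s / t) • (z - x) := by rw [hy]; abel
  -- z - y = ((t-s)/t) • (z - x)
  have hzy : z - y = ((t - s) / t) • (z - x) := by
    rw [hy]
    have : (t - s) / t = 1 - s / t := by field_simp
    rw [this]
    module
  -- norms
  have hnyx' : ‖y - x'‖ = s := by
    rw [hyx', norm_smul, hzx', Real.norm_eq_abs, abs_of_pos (div_pos hs ht)]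
    field_simp
  have hnzy : ‖z - y‖ = t - s := by
    rw [hzy, norm_smul, hzx, Real.norm_eq_abs, abs_of_pos (div_pos hts ht)]
    field_simp
  -- t ≤ ‖z - x'‖
  have h1 : t ≤ ‖z - x'‖ := by
    have h := Metric.infDist_le_dist_of_mem (x := z) hx'
    rw [← hu, huz, dist_eq_norm] at h
    exact h
  -- triangle equality
  have h2 : ‖(z - y) + (y - x')‖ = ‖z - y‖ + ‖y - x'‖ := by
    have hle : ‖(z - y) + (y - x')‖ ≤ ‖z - y‖ + ‖y - x'‖ := norm_add_le _ _
    have heq : (z - y) + (y - x') = z - x' := by abel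
    rw [heq] at hle ⊢
    rw [hnzy, hnyx']
    linarith
  have hray : SameRay ℝ (z - y) (y - x') := sameRay_iff_norm_add.2 h2
  have hkey := hray.norm_smul_eq
  rw [hnzy, hnyx'] at hkey
  -- (t-s) • (y - x') = s • (z - y)
  have hxx : x = x' := by
    have h3 : (t - s) • (y - x') = (t - s) • (y - x) := by
      rw [hkey, hzy, hyx, smul_smul, smul_smul]
      congr 1
      field_simp
    have h4 := smul_right_injective _ (ne_of_gt hts) h3
    exact (sub_right_injective h4).symm
  refine ⟨hxx, ?_⟩
  rw [hxx] at hy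
  rw [hy] at hy'
  have h5 : (s / t) • (z - x') = (s / t) • (z' - x') := by
    have := add_left_cancel hy'
    exact this
  have h6 := smul_right_injective _ (ne_of_gt (div_pos hs ht)) h5
  exact sub_left_injective h6
end

section
/- Let Ω be a nonempty open subset of ℝ^{n+1} (n ≥ 1) with nonempty topological boundary ∂Ω, let u(y) = dist(y, ∂Ω), let 0 < s < t, and let y ∈ Γ_s^t with configuration (x, z). Then for every R > 0, the Lebesgue measure of the set ((Ω_s − y)/ρ △ H) ∩ B_R(0) tends to 0 as ρ → 0⁺, where (Ω_s − y)/ρ = {(w − y)/ρ : w ∈ Ω_s} and H = {w ∈ ℝ^{n+1} : ⟨w, x − z⟩ < 0} is the open half-space with inner normal z − x. That is, the blow-ups of Ω_s at y converge in L¹_loc, as characteristic functions, to the half-space [x − z]⁻. -/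
open RealInnerProductSpace Metric Set MeasureTheory Filter
open scoped symmDiff Topology

/-!
Since `y` lies on the segment `[x, z]`, the open ball `B(z, t - s) ⊆ Ω_s` and the closed ball
`B̄(x, s)`, which misses `Ω_s`, both touch `y` and are tangent there to the hyperplane
`⟪·, x - z⟫ = 0`. Hence every point `v ∈ B_R(0)` of the symmetric difference at scale `ρ`
satisfies `|⟪v, x - z⟫| ≤ C ρ`, and these slabs shrink to a hyperplane, a null set.
-/

section Metric

variable {E : Type*} [NormedAddCommGroup E] [NormedSpace ℝ E] [FiniteDimensional ℝ E]
  {Ω : Set E} {z : E} {s : ℝ}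

theorem ball_infDist_frontier_subset (hz : z ∈ Ω) (hΩ : Ω ≠ univ) :
    ball z (infDist z (frontier Ω)) ⊆ Ω := by
  obtain ⟨x, hx, hdist⟩ := exists_mem_frontier_infDist_compl_eq_dist hz hΩ
  calc ball z (infDist z (frontier Ω)) ⊆ ball z (infDist z Ωᶜ) :=
        ball_subset_ball (hdist ▸ infDist_le_dist_of_mem hx)
    _ ⊆ Ω := ball_infDist_compl_subset

theorem ball_infDist_frontier_sub_subset (hz : z ∈ Ω) (hΩ : Ω ≠ univ) (hs : 0 ≤ s) :
    ball z (infDist z (frontier Ω) - s) ⊆ {w | w ∈ Ω ∧ s < infDist w (frontier Ω)} := by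
  intro w hw
  rw [mem_ball'] at hw
  refine ⟨ball_infDist_frontier_subset hz hΩ (mem_ball'.2 (by linarith)), ?_⟩
  linarith [infDist_le_infDist_add_dist (s := frontier Ω) (x := z) (y := w)]

end Metric

section InnerProduct

variable {E : Type*} [NormedAddCommGroup E] [InnerProductSpace ℝ E]

theorem norm_le_norm_sub_iff_two_mul_inner_le (w p : E) :
    ‖p‖ ≤ ‖w - p‖ ↔ 2 * ⟪w, p⟫ ≤ ‖w‖ ^ 2 := by
  rw [← sq_le_sq₀ (norm_nonneg _) (norm_nonneg _), norm_sub_sq_real]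
  constructor <;> intro h <;> linarith

theorem norm_lt_norm_sub_iff_two_mul_inner_lt (w p : E) :
    ‖p‖ < ‖w - p‖ ↔ 2 * ⟪w, p⟫ < ‖w‖ ^ 2 := by
  rw [← sq_lt_sq₀ (norm_nonneg _) (norm_nonneg _), norm_sub_sq_real]
  constructor <;> intro h <;> linarith

theorem mem_image_smul_inv_sub_iff {A : Set E} {y v : E} {ρ : ℝ} (hρ : ρ ≠ 0) :
    v ∈ (fun w => ρ⁻¹ • (w - y)) '' A ↔ y + ρ • v ∈ A := by
  constructor
  · rintro ⟨w, hw, rfl⟩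
    simpa [smul_smul, mul_inv_cancel₀ hρ] using hw
  · exact fun h => ⟨y + ρ • v, h, by simp [smul_smul, inv_mul_cancel₀ hρ]⟩

variable {A : Set E} {y ν v : E} {a b ρ : ℝ}

theorem neg_le_inner_of_ball_subset (hA : ball (y - a • ν) (a * ‖ν‖) ⊆ A) (ha : 0 < a)
    (hρ : 0 < ρ) (hv : y + ρ • v ∉ A) : -(ρ * ‖v‖ ^ 2 / (2 * a)) ≤ ⟪v, ν⟫ := by
  have hfar : ‖-(a • ν)‖ ≤ ‖ρ • v - -(a • ν)‖ := by
    have := not_lt.1 fun h => hv (hA (mem_ball.2 h))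
    rw [dist_eq_norm, add_sub_sub_cancel] at this
    rwa [sub_neg_eq_add, norm_neg, norm_smul, Real.norm_of_nonneg ha.le]
  rw [norm_le_norm_sub_iff_two_mul_inner_le, inner_neg_right, real_inner_smul_left,
    real_inner_smul_right, norm_smul, Real.norm_of_nonneg hρ.le] at hfar
  rw [neg_le, le_div_iff₀ (by positivity)]
  nlinarith

theorem inner_lt_of_disjoint_closedBall (hA : Disjoint A (closedBall (y + b • ν) (b * ‖ν‖)))
    (hb : 0 < b) (hρ : 0 < ρ) (hv : y + ρ • v ∈ A) : ⟪v, ν⟫ < ρ * ‖v‖ ^ 2 / (2 * b) := by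
  have hfar : ‖b • ν‖ < ‖ρ • v - b • ν‖ := by
    have := not_le.1 (mem_closedBall.not.1 (disjoint_left.1 hA hv))
    rw [dist_eq_norm, add_sub_add_left_eq_sub] at this
    rwa [norm_smul, Real.norm_of_nonneg hb.le]
  rw [norm_lt_norm_sub_iff_two_mul_inner_lt, real_inner_smul_left, real_inner_smul_right,
    norm_smul, Real.norm_of_nonneg hρ.le] at hfar
  rw [lt_div_iff₀ (by positivity)]
  nlinarith

theorem image_smul_inv_sub_symmDiff_inter_ball_subset (hin : ball (y - a • ν) (a * ‖ν‖) ⊆ A)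
    (hout : Disjoint A (closedBall (y + b • ν) (b * ‖ν‖))) (ha : 0 < a) (hb : 0 < b)
    (hρ : 0 < ρ) (R : ℝ) :
    (((fun w => ρ⁻¹ • (w - y)) '' A) ∆ {v | ⟪v, ν⟫ < 0}) ∩ ball 0 R ⊆
      {v | |⟪v, ν⟫| ≤ R ^ 2 / (2 * min a b) * ρ} ∩ ball 0 R := by
  rintro v ⟨hv, hvR⟩
  refine ⟨?_, hvR⟩
  have hvR2 : ‖v‖ ^ 2 ≤ R ^ 2 :=
    pow_le_pow_left₀ (norm_nonneg v) (mem_ball_zero_iff.1 hvR).le 2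
  have hbound : ∀ c, 0 < c → min a b ≤ c → ρ * ‖v‖ ^ 2 / (2 * c) ≤ R ^ 2 / (2 * min a b) * ρ :=
    fun c hc hmin => calc
      ρ * ‖v‖ ^ 2 / (2 * c) ≤ ρ * R ^ 2 / (2 * min a b) := by
        have : 0 < min a b := lt_min ha hb
        gcongr
      _ = R ^ 2 / (2 * min a b) * ρ := by ring
  rw [mem_symmDiff, mem_image_smul_inv_sub_iff hρ.ne'] at hv
  simp only [mem_ofPred_eq] at hv ⊢
  rcases hv with ⟨hvA, hvH⟩ | ⟨hvH, hvA⟩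
  · rw [abs_of_nonneg (not_lt.1 hvH)]
    exact (inner_lt_of_disjoint_closedBall hout hb hρ hvA).le.trans
      (hbound b hb (min_le_right a b))
  · rw [abs_of_neg hvH]
    linarith [neg_le_inner_of_ball_subset hin ha hρ hvA, hbound a ha (min_le_left a b)]

theorem tendsto_measure_abs_inner_le_inter [FiniteDimensional ℝ E] [MeasurableSpace E]
    [BorelSpace E] (μ : Measure E) [μ.IsAddHaarMeasure] (hν : ν ≠ 0) {S : Set E}
    (hS : MeasurableSet S) (hSμ : μ S ≠ ⊤) :
    Tendsto (fun δ => μ ({v | |⟪v, ν⟫| ≤ δ} ∩ S)) (𝓝[>] 0) (𝓝 0) := by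
  have hlim := tendsto_measure_biInter_gt (μ := μ) (s := fun δ => {v | |⟪v, ν⟫| ≤ δ} ∩ S)
    (a := 0) (fun _ _ => ((isClosed_le (by fun_prop) continuous_const).measurableSet.inter
      hS).nullMeasurableSet)
    (fun _ _ _ hij => inter_subset_inter_left _ fun _ hv => le_trans hv hij)
    ⟨1, one_pos, ((measure_mono inter_subset_right).trans_lt hSμ.lt_top).ne⟩
  suffices μ (⋂ δ > 0, {v | |⟪v, ν⟫| ≤ δ} ∩ S) = 0 by rwa [this] at hlim
  refine measure_mono_null (t := (ℝ ∙ ν)ᗮ) ?_ (Measure.addHaar_submodule μ _ ?_)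
  · intro v hv
    simp only [mem_iInter] at hv
    rw [SetLike.mem_coe, Submodule.mem_orthogonal_singleton_iff_inner_left]
    exact abs_nonpos_iff.1 (le_of_forall_pos_le_add fun ε hε => by simpa using (hv ε hε).1)
  · rw [Ne, Submodule.orthogonal_eq_top_iff, Submodule.span_singleton_eq_bot]
    exact hν

end InnerProduct

theorem stmt_8_general (n : ℕ)
    (Ω : Set (EuclideanSpace ℝ (Fin (n + 1))))
    (u : EuclideanSpace ℝ (Fin (n + 1)) → ℝ)
    (hu : ∀ y, u y = Metric.infDist y (frontier Ω))
    (s t : ℝ) (hs : 0 < s) (hst : s < t)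
    (y x z : EuclideanSpace ℝ (Fin (n + 1)))
    (hx : x ∈ frontier Ω) (hz : z ∈ Ω) (huz : u z = t) (hxz : ‖x - z‖ = t)
    (hy : y = x + (s / t) • (z - x)) :
    ∀ R > (0 : ℝ),
      Tendsto
        (fun ρ : ℝ => volume
          ((((fun w => ρ⁻¹ • (w - y)) '' {w | w ∈ Ω ∧ s < u w}) ∆
              {w : EuclideanSpace ℝ (Fin (n + 1)) | ⟪w, x - z⟫ < 0}) ∩
            Metric.ball 0 R))
        (nhdsWithin 0 (Set.Ioi 0)) (nhds 0) := by
  intro R hR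
  simp only [hu] at huz ⊢
  have ht : 0 < t := hs.trans hst
  have hΩ : Ω ≠ univ := by rintro rfl; simp at hx
  have hin : ball (y - ((t - s) / t) • (x - z)) ((t - s) / t * ‖x - z‖) ⊆
      {w | w ∈ Ω ∧ s < infDist w (frontier Ω)} := by
    have hcenter : y - ((t - s) / t) • (x - z) = z := by
      rw [hy, sub_div, div_self ht.ne']
      module
    rw [hcenter, hxz, div_mul_cancel₀ _ ht.ne', ← huz]
    exact ball_infDist_frontier_sub_subset hz hΩ hs.le
  have hout : Disjoint {w | w ∈ Ω ∧ s < infDist w (frontier Ω)}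
      (closedBall (y + (s / t) • (x - z)) (s / t * ‖x - z‖)) := by
    have hcenter : y + (s / t) • (x - z) = x := by rw [hy]; module
    rw [hcenter, hxz, div_mul_cancel₀ _ ht.ne', disjoint_left]
    exact fun w hw hwx => (hw.2.trans_le (infDist_le_dist_of_mem hx)).not_ge hwx
  have ha : 0 < (t - s) / t := div_pos (sub_pos.2 hst) ht
  have hb : 0 < s / t := div_pos hs ht
  have hscale : Tendsto (R ^ 2 / (2 * min ((t - s) / t) (s / t)) * ·) (𝓝[>] 0) (𝓝[>] 0) :=
    tendsto_comap.mono_left (comap_mulLeft_nhdsGT_zero (by positivity)).ge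
  have hslab := (tendsto_measure_abs_inner_le_inter volume (norm_pos_iff.1 (hxz ▸ ht))
    (measurableSet_ball (x := 0) (ε := R)) measure_ball_lt_top.ne).comp hscale
  refine tendsto_of_tendsto_of_tendsto_of_le_of_le' tendsto_const_nhds hslab
    (Eventually.of_forall fun _ => zero_le) ?_
  filter_upwards [self_mem_nhdsWithin] with ρ hρ
  exact measure_mono (image_smul_inv_sub_symmDiff_inter_ball_subset hin hout ha hb hρ R)

/-- Blow-ups of `Ω_s` at a point `y ∈ Γ_s^t` with configuration `(x, z)` converge in
`L¹_loc`, as characteristic functions, to the half-space `[x - z]⁻`. -/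
theorem stmt_8 (n : ℕ) (hn : 1 ≤ n)
    (Ω : Set (EuclideanSpace ℝ (Fin (n + 1))))
    (hΩopen : IsOpen Ω) (hΩne : Ω.Nonempty) (hfr : (frontier Ω).Nonempty)
    (u : EuclideanSpace ℝ (Fin (n + 1)) → ℝ)
    (hu : ∀ y, u y = Metric.infDist y (frontier Ω))
    (s t : ℝ) (hs : 0 < s) (hst : s < t)
    (y x z : EuclideanSpace ℝ (Fin (n + 1)))
    (hx : x ∈ frontier Ω) (hz : z ∈ Ω) (huz : u z = t) (hxz : ‖x - z‖ = t)
    (hy : y = x + (s / t) • (z - x)) :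
    ∀ R > (0 : ℝ),
      Tendsto
        (fun ρ : ℝ => volume
          ((((fun w => ρ⁻¹ • (w - y)) '' {w | w ∈ Ω ∧ s < u w}) ∆
              {w : EuclideanSpace ℝ (Fin (n + 1)) | ⟪w, x - z⟫ < 0}) ∩
            Metric.ball 0 R))
        (nhdsWithin 0 (Set.Ioi 0)) (nhds 0) :=
  stmt_8_general n Ω u hu s t hs hst y x z hx hz huz hxz hy
end

section
/- Let Ω be a nonempty open subset of ℝ^{n+1} (n ≥ 1) with nonempty topological boundary ∂Ω, let u(y) = dist(y, ∂Ω), let 0 < s < t, and let y ∈ Γ_s^t with configuration (x, z). Then u is differentiable at y, and its gradient is the unit vector N(y) = ∇u(y) = (z − x)/t = −(x − z)/‖x − z‖. -/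
/-!
Since `u` is 1-Lipschitz and `x ∈ ∂Ω`, every `w` satisfies `t - ‖w - z‖ ≤ u w ≤ ‖w - x‖`, with
equality at every point strictly between `x` and `z`. Both bounds are smooth there with the same
gradient `(z - x) / t`, so `u`, squeezed between them, has that gradient too.
-/

open Metric Filter Topology Asymptotics

theorem HasFDerivAt.of_eventually_le_of_le {E : Type*} [NormedAddCommGroup E] [NormedSpace ℝ E]
    {f u g : E → ℝ} {L : StrongDual ℝ E} {y : E}
    (hf : HasFDerivAt f L y) (hg : HasFDerivAt g L y)
    (hfu : ∀ᶠ w in 𝓝 y, f w ≤ u w) (hug : ∀ᶠ w in 𝓝 y, u w ≤ g w) (hfg : f y = g y) :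
    HasFDerivAt u L y := by
  have huy : u y = f y := le_antisymm (hfg ▸ hug.self_of_nhds) hfu.self_of_nhds
  have hbound : ∀ᶠ w in 𝓝 y, ‖u w - u y - L (w - y)‖ ≤
      ‖‖f w - f y - L (w - y)‖ + ‖g w - g y - L (w - y)‖‖ := by
    filter_upwards [hfu, hug] with w hfw hgw
    refine le_trans ?_ (Real.le_norm_self _)
    simp only [Real.norm_eq_abs]
    rw [abs_le]
    constructor <;> linarith [neg_abs_le (f w - f y - L (w - y)),
      le_abs_self (g w - g y - L (w - y)), abs_nonneg (f w - f y - L (w - y)),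
      abs_nonneg (g w - g y - L (w - y))]
  exact hasFDerivAt_iff_isLittleO.2 <|
    (IsBigO.of_bound' hbound).trans_isLittleO (hf.isLittleO.norm_left.add hg.isLittleO.norm_left)

section InnerProductSpace

variable {E : Type*} [NormedAddCommGroup E] [InnerProductSpace ℝ E] [CompleteSpace E]

theorem hasGradientAt_norm_sub {a y : E} (hy : y ≠ a) :
    HasGradientAt (‖· - a‖) (‖y - a‖⁻¹ • (y - a)) y := by
  have hsq := (hasStrictFDerivAt_norm_sq (y - a)).hasFDerivAt.comp y
    ((hasFDerivAt_id y).sub_const a)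
  have h := hsq.sqrt (by simpa [sub_eq_zero] using hy)
  simp only [Function.comp_def, id_eq, Real.sqrt_sq (norm_nonneg _)] at h
  refine h.congr_fderiv ?_
  ext w
  simp only [one_div, mul_inv_rev, map_sub, ContinuousLinearMap.comp_id, smul_apply, sub_apply,
    coe_innerSL_apply, nsmul_eq_mul, Nat.cast_ofNat, smul_eq_mul, map_smul,
    InnerProductSpace.toDual_apply_apply]
  ring

theorem hasGradientAt_norm_sub_add_smul {a v : E} {c : ℝ} (hv : v ≠ 0) (hc : 0 < c) :
    HasGradientAt (‖· - a‖) (‖v‖⁻¹ • v) (a + c • v) := by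
  convert hasGradientAt_norm_sub (a := a) (y := a + c • v) (by simp [hv, hc.ne']) using 1
  rw [add_sub_cancel_left, norm_smul, Real.norm_of_nonneg hc.le, smul_smul]
  congr 1
  field_simp

theorem hasGradientAt_infDist_of_infDist_eq_dist {S : Set E} {x z : E} {c : ℝ}
    (hx : x ∈ S) (hz : infDist z S = dist z x) (hxz : x ≠ z) (hc₀ : 0 < c) (hc₁ : c < 1) :
    HasGradientAt (infDist · S) (‖z - x‖⁻¹ • (z - x)) (x + c • (z - x)) := by
  set y := x + c • (z - x)
  rw [dist_eq_norm] at hz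
  have upper (w : E) : infDist w S ≤ ‖w - x‖ := dist_eq_norm w x ▸ infDist_le_dist_of_mem hx
  have lower (w : E) : ‖z - x‖ - ‖w - z‖ ≤ infDist w S := by
    have := infDist_le_infDist_add_dist (s := S) (x := z) (y := w)
    rw [hz, dist_comm, dist_eq_norm] at this
    linarith
  have hyx : y - x = c • (z - x) := add_sub_cancel_left _ _
  have hyz : y = z + (1 - c) • (x - z) := by module
  have hupper := hasGradientAt_norm_sub_add_smul (a := x) (sub_ne_zero.2 hxz.symm) hc₀
  have hlower := ((hasGradientAt_norm_sub_add_smul (a := z) (sub_ne_zero.2 hxz)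
    (sub_pos.2 hc₁)).hasFDerivAt).const_sub ‖z - x‖
  rw [← hyz, ← map_neg, ← smul_neg, neg_sub, norm_sub_rev x z] at hlower
  refine hlower.of_eventually_le_of_le hupper.hasFDerivAt (.of_forall lower) (.of_forall upper) ?_
  rw [hyx, hyz, add_sub_cancel_left, norm_smul, norm_smul, Real.norm_of_nonneg hc₀.le,
    Real.norm_of_nonneg (sub_pos.2 hc₁).le, norm_sub_rev x z]
  ring

end InnerProductSpace

theorem stmt_9_general (n : ℕ)
    (Ω : Set (EuclideanSpace ℝ (Fin (n + 1))))
    (u : EuclideanSpace ℝ (Fin (n + 1)) → ℝ)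
    (hu : ∀ y, u y = Metric.infDist y (frontier Ω))
    (s t : ℝ) (hs : 0 < s) (hst : s < t)
    (y x z : EuclideanSpace ℝ (Fin (n + 1)))
    (hx : x ∈ frontier Ω) (huz : u z = t) (hxz : ‖x - z‖ = t)
    (hy : y = x + (s / t) • (z - x)) :
    HasGradientAt u (t⁻¹ • (z - x)) y := by
  have hzx : ‖z - x‖ = t := norm_sub_rev x z ▸ hxz
  subst hzx hy
  have ht := hs.trans hst
  rw [show u = (infDist · (frontier Ω)) from funext hu]
  exact hasGradientAt_infDist_of_infDist_eq_dist hx (by rw [← hu, huz, dist_eq_norm])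
    (fun h => by simp [h] at ht) (div_pos hs ht) ((div_lt_one ht).2 hst)

/-- At a point `y ∈ Γ_s^t` with configuration `(x, z)`, the distance function
`u = dist(·, ∂Ω)` is differentiable with gradient the unit vector
`N(y) = (z - x)/t = -(x - z)/‖x - z‖`. -/
theorem stmt_9 (n : ℕ) (hn : 1 ≤ n)
    (Ω : Set (EuclideanSpace ℝ (Fin (n + 1))))
    (hΩopen : IsOpen Ω) (hΩne : Ω.Nonempty) (hfr : (frontier Ω).Nonempty)
    (u : EuclideanSpace ℝ (Fin (n + 1)) → ℝ)
    (hu : ∀ y, u y = Metric.infDist y (frontier Ω))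
    (s t : ℝ) (hs : 0 < s) (hst : s < t)
    (y x z : EuclideanSpace ℝ (Fin (n + 1)))
    (hx : x ∈ frontier Ω) (hz : z ∈ Ω) (huz : u z = t) (hxz : ‖x - z‖ = t)
    (hy : y = x + (s / t) • (z - x)) :
    HasGradientAt u (t⁻¹ • (z - x)) y :=
  stmt_9_general n Ω u hu s t hs hst y x z hx huz hxz hy
end

section
/- Let Ω be a nonempty open subset of ℝ^{n+1} (n ≥ 1) with nonempty topological boundary ∂Ω, let u(y) = dist(y, ∂Ω), and let 0 < s < t. Then there exist countably many compact sets U_j (j ∈ ℕ) covering Γ_s^t, and constants C_j > 0, such that the normal map N (N(y) = (z−x)/t for the configuration (x, z) of y, i.e. N(y) = ∇u(y)) satisfies ‖N(y₁) − N(y₂)‖ ≤ C_j ‖y₁ − y₂‖ for all y₁, y₂ ∈ U_j. In other words, N is Lipschitz on the pieces of a countable compact decomposition of Γ_s^t. -/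
/-!
Write a configuration as `z = x + t • N`, `y = x + s • N` with `‖N‖ = 1`. The open ball of
radius `t` about `z` misses `∂Ω`, so the cross distances `‖z₁ - x₂‖`, `‖z₂ - x₁‖` are at least `t`.
Expanding their squares gives
`s (t - s) ‖N₁ - N₂‖² ≤ ‖y₁ - y₂‖² + (t - 2 s) ⟪y₁ - y₂, N₁ - N₂⟫`,
whence `‖N₁ - N₂‖ ≤ ‖y₁ - y₂‖ / min s (t - s)` on all of `Γ_s^t`. The compact pieces come from
σ-compactness: `Γ_s^t` is a continuous image of the closed set of configurations, a subset of
the proper space of pairs.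
-/

open RealInnerProductSpace Metric Set

section Lipschitz

variable {E : Type*} [NormedAddCommGroup E] [InnerProductSpace ℝ E]

lemma norm_add_smul_sub_sq_add_norm_add_smul_sub_sq (s t : ℝ) {x₁ x₂ n₁ n₂ : E}
    (hn₁ : ‖n₁‖ = 1) (hn₂ : ‖n₂‖ = 1) :
    ‖x₁ + t • n₁ - x₂‖ ^ 2 + ‖x₂ + t • n₂ - x₁‖ ^ 2 =
      2 * t ^ 2 + 2 * ‖x₁ + s • n₁ - (x₂ + s • n₂)‖ ^ 2
        + 2 * (t - 2 * s) * ⟪x₁ + s • n₁ - (x₂ + s • n₂), n₁ - n₂⟫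
        - 2 * s * (t - s) * ‖n₁ - n₂‖ ^ 2 := by
  have h₁ : ⟪n₁, n₁⟫ = 1 := by rw [real_inner_self_eq_norm_sq, hn₁, one_pow]
  have h₂ : ⟪n₂, n₂⟫ = 1 := by rw [real_inner_self_eq_norm_sq, hn₂, one_pow]
  simp only [← real_inner_self_eq_norm_sq, inner_sub_left, inner_sub_right, inner_add_left,
    inner_add_right, real_inner_smul_right, real_inner_comm]
  linear_combination t ^ 2 * h₁ + t ^ 2 * h₂

lemma min_mul_le_of_mul_sq_le {s t a b c : ℝ} (ha : 0 ≤ a) (hb : 0 ≤ b)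
    (hc : |c| ≤ a * b) (h : s * (t - s) * a ^ 2 ≤ b ^ 2 + (t - 2 * s) * c) :
    min s (t - s) * a ≤ b := by
  -- with `{m, M} = {s, t - s}` and `m ≤ M`, the hypothesis gives `(M * a + b) * (m * a - b) ≤ 0`
  have hc' := abs_le.mp hc
  rcases le_total s (t - s) with hle | hle
  · rw [min_eq_left hle]
    by_contra! hlt
    nlinarith [mul_nonneg (sub_nonneg.mpr hle) ha, mul_nonneg hb ha]
  · rw [min_eq_right hle]
    by_contra! hlt
    nlinarith [mul_nonneg (sub_nonneg.mpr hle) ha, mul_nonneg hb ha]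

lemma min_mul_norm_sub_le_norm_sub {s t : ℝ} {x₁ x₂ n₁ n₂ : E} (ht : 0 ≤ t)
    (hn₁ : ‖n₁‖ = 1) (hn₂ : ‖n₂‖ = 1)
    (h₁ : t ≤ ‖x₁ + t • n₁ - x₂‖) (h₂ : t ≤ ‖x₂ + t • n₂ - x₁‖) :
    min s (t - s) * ‖n₁ - n₂‖ ≤ ‖x₁ + s • n₁ - (x₂ + s • n₂)‖ := by
  refine min_mul_le_of_mul_sq_le (norm_nonneg _) (norm_nonneg _)
    (c := ⟪x₁ + s • n₁ - (x₂ + s • n₂), n₁ - n₂⟫) ?_ ?_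
  · rw [mul_comm]
    exact abs_real_inner_le_norm _ _
  · have hid := norm_add_smul_sub_sq_add_norm_add_smul_sub_sq s t (x₁ := x₁) (x₂ := x₂) hn₁ hn₂
    nlinarith [hid, pow_le_pow_left₀ ht h₁ 2, pow_le_pow_left₀ ht h₂ 2]

lemma norm_normal_sub_le {s t : ℝ} {A : Set E} {x₁ z₁ x₂ z₂ : E} (hs : 0 < s) (hst : s < t)
    (hx₁ : x₁ ∈ A) (hx₂ : x₂ ∈ A) (hz₁ : infDist z₁ A = t) (hz₂ : infDist z₂ A = t)
    (h₁ : ‖x₁ - z₁‖ = t) (h₂ : ‖x₂ - z₂‖ = t) :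
    ‖t⁻¹ • (z₁ - x₁) - t⁻¹ • (z₂ - x₂)‖ ≤
      (min s (t - s))⁻¹ * ‖x₁ + (s / t) • (z₁ - x₁) - (x₂ + (s / t) • (z₂ - x₂))‖ := by
  have ht : 0 < t := hs.trans hst
  have hunit {x z : E} (h : ‖x - z‖ = t) : ‖t⁻¹ • (z - x)‖ = 1 := by
    rw [norm_smul, norm_sub_rev, h, norm_inv, Real.norm_of_nonneg ht.le, inv_mul_cancel₀ ht.ne']
  have hz (x z : E) : x + t • t⁻¹ • (z - x) = z := by
    rw [smul_inv_smul₀ ht.ne', add_sub_cancel]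
  have hy (x z : E) : x + s • t⁻¹ • (z - x) = x + (s / t) • (z - x) := by
    rw [smul_smul, div_eq_mul_inv]
  have h₁₂ : t ≤ ‖z₁ - x₂‖ := hz₁ ▸ dist_eq_norm z₁ x₂ ▸ infDist_le_dist_of_mem hx₂
  have h₂₁ : t ≤ ‖z₂ - x₁‖ := hz₂ ▸ dist_eq_norm z₂ x₁ ▸ infDist_le_dist_of_mem hx₁
  rw [le_inv_mul_iff₀ (lt_min hs (sub_pos.mpr hst)), ← hy, ← hy]
  exact min_mul_norm_sub_le_norm_sub ht.le (hunit h₁) (hunit h₂) (by rwa [hz]) (by rwa [hz])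

end Lipschitz

lemma mem_of_mem_closure_of_infDist_frontier_pos {X : Type*} [PseudoMetricSpace X] {Ω : Set X}
    {z : X} (hz : z ∈ closure Ω) (hpos : 0 < infDist z (frontier Ω)) : z ∈ Ω := by
  refine interior_subset (closure_sdiff_frontier Ω ▸ ⟨hz, fun hfr => ?_⟩)
  exact hpos.ne' (infDist_zero_of_mem hfr)

section Configurations

variable {E : Type*} [NormedAddCommGroup E]

def normalConfigurations (Ω : Set E) (t : ℝ) : Set (E × E) :=
  {p | p.1 ∈ frontier Ω ∧ p.2 ∈ Ω ∧ infDist p.2 (frontier Ω) = t ∧ ‖p.1 - p.2‖ = t}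

lemma isClosed_normalConfigurations (Ω : Set E) {t : ℝ} (ht : 0 < t) :
    IsClosed (normalConfigurations Ω t) := by
  have hclosure : normalConfigurations Ω t = {p | p.1 ∈ frontier Ω ∧ p.2 ∈ closure Ω ∧
      infDist p.2 (frontier Ω) = t ∧ ‖p.1 - p.2‖ = t} := by
    ext p
    refine and_congr_right fun _ => ⟨fun ⟨hz, h⟩ => ⟨subset_closure hz, h⟩, fun ⟨hz, h⟩ => ?_⟩
    exact ⟨mem_of_mem_closure_of_infDist_frontier_pos hz (h.1 ▸ ht), h⟩
  rw [hclosure]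
  exact (isClosed_frontier.preimage continuous_fst).inter <|
    (isClosed_closure.preimage continuous_snd).inter <|
      (isClosed_eq (by fun_prop) continuous_const).inter (isClosed_eq (by fun_prop) continuous_const)

lemma isSigmaCompact_setOf_normalConfigurations [NormedSpace ℝ E] [ProperSpace E]
    (Ω : Set E) (s : ℝ) {t : ℝ} (ht : 0 < t) :
    IsSigmaCompact {y | ∃ x z, x ∈ frontier Ω ∧ z ∈ Ω ∧ infDist z (frontier Ω) = t ∧
      ‖x - z‖ = t ∧ y = x + (s / t) • (z - x)} := by
  have hF : Continuous fun p : E × E => p.1 + (s / t) • (p.2 - p.1) := by fun_prop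
  convert (isSigmaCompact_univ.of_isClosed_subset (isClosed_normalConfigurations Ω ht)
    (subset_univ _)).image hF using 1
  ext y
  simp only [mem_ofPred_eq, mem_image, Prod.exists, normalConfigurations, and_assoc, eq_comm]

end Configurations

theorem stmt_11_general (n : ℕ)
    (Ω : Set (EuclideanSpace ℝ (Fin (n + 1))))
    (u : EuclideanSpace ℝ (Fin (n + 1)) → ℝ)
    (hu : ∀ y, u y = Metric.infDist y (frontier Ω))
    (s t : ℝ) (hs : 0 < s) (hst : s < t) :
    ∃ (U : ℕ → Set (EuclideanSpace ℝ (Fin (n + 1)))) (C : ℕ → ℝ),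
      (∀ j, IsCompact (U j)) ∧ (∀ j, 0 < C j) ∧
      (∀ j, U j ⊆ {y | ∃ x z, x ∈ frontier Ω ∧ z ∈ Ω ∧ u z = t ∧ ‖x - z‖ = t ∧
        y = x + (s / t) • (z - x)}) ∧
      {y | ∃ x z, x ∈ frontier Ω ∧ z ∈ Ω ∧ u z = t ∧ ‖x - z‖ = t ∧
        y = x + (s / t) • (z - x)} ⊆ ⋃ j, U j ∧
      (∀ j, ∀ y₁ ∈ U j, ∀ y₂ ∈ U j,
        ∀ x₁ z₁ x₂ z₂ : EuclideanSpace ℝ (Fin (n + 1)),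
          (x₁ ∈ frontier Ω ∧ z₁ ∈ Ω ∧ u z₁ = t ∧ ‖x₁ - z₁‖ = t ∧
            y₁ = x₁ + (s / t) • (z₁ - x₁)) →
          (x₂ ∈ frontier Ω ∧ z₂ ∈ Ω ∧ u z₂ = t ∧ ‖x₂ - z₂‖ = t ∧
            y₂ = x₂ + (s / t) • (z₂ - x₂)) →
          ‖t⁻¹ • (z₁ - x₁) - t⁻¹ • (z₂ - x₂)‖ ≤ C j * ‖y₁ - y₂‖) := by
  simp only [hu]
  obtain ⟨K, hK, hKΓ⟩ := isSigmaCompact_setOf_normalConfigurations Ω s (hs.trans hst)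
  refine ⟨K, fun _ => (min s (t - s))⁻¹, hK, fun _ => inv_pos.2 (lt_min hs (sub_pos.2 hst)),
    fun j => hKΓ ▸ subset_iUnion K j, hKΓ.ge, ?_⟩
  rintro j y₁ - y₂ - x₁ z₁ x₂ z₂ ⟨hx₁, -, hz₁, h₁, rfl⟩ ⟨hx₂, -, hz₂, h₂, rfl⟩
  exact norm_normal_sub_le hs hst hx₁ hx₂ hz₁ hz₂ h₁ h₂

/-- The normal map `N` is Lipschitz on the pieces of a countable compact decomposition
of `Γ_s^t`: there are compact sets `U_j ⊆ Γ_s^t` covering `Γ_s^t` and constants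
`C_j > 0` with `‖N(y₁) - N(y₂)‖ ≤ C_j ‖y₁ - y₂‖` on each `U_j`. -/
theorem stmt_11 (n : ℕ) (hn : 1 ≤ n)
    (Ω : Set (EuclideanSpace ℝ (Fin (n + 1))))
    (hΩopen : IsOpen Ω) (hΩne : Ω.Nonempty) (hfr : (frontier Ω).Nonempty)
    (u : EuclideanSpace ℝ (Fin (n + 1)) → ℝ)
    (hu : ∀ y, u y = Metric.infDist y (frontier Ω))
    (s t : ℝ) (hs : 0 < s) (hst : s < t) :
    ∃ (U : ℕ → Set (EuclideanSpace ℝ (Fin (n + 1)))) (C : ℕ → ℝ),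
      (∀ j, IsCompact (U j)) ∧ (∀ j, 0 < C j) ∧
      (∀ j, U j ⊆ {y | ∃ x z, x ∈ frontier Ω ∧ z ∈ Ω ∧ u z = t ∧ ‖x - z‖ = t ∧
        y = x + (s / t) • (z - x)}) ∧
      {y | ∃ x z, x ∈ frontier Ω ∧ z ∈ Ω ∧ u z = t ∧ ‖x - z‖ = t ∧
        y = x + (s / t) • (z - x)} ⊆ ⋃ j, U j ∧
      (∀ j, ∀ y₁ ∈ U j, ∀ y₂ ∈ U j,
        ∀ x₁ z₁ x₂ z₂ : EuclideanSpace ℝ (Fin (n + 1)),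
          (x₁ ∈ frontier Ω ∧ z₁ ∈ Ω ∧ u z₁ = t ∧ ‖x₁ - z₁‖ = t ∧
            y₁ = x₁ + (s / t) • (z₁ - x₁)) →
          (x₂ ∈ frontier Ω ∧ z₂ ∈ Ω ∧ u z₂ = t ∧ ‖x₂ - z₂‖ = t ∧
            y₂ = x₂ + (s / t) • (z₂ - x₂)) →
          ‖t⁻¹ • (z₁ - x₁) - t⁻¹ • (z₂ - x₂)‖ ≤ C j * ‖y₁ - y₂‖) :=
  stmt_11_general n Ω u hu s t hs hst
end

section
/- Let Ω be a nonempty open subset of ℝ^{n+1} (n ≥ 1) with nonempty topological boundary ∂Ω, let u(y) = dist(y, ∂Ω), and let s > 0. Then Γ_s^+ = ⋃_{t>s} Γ_s^t can be covered by countably many C^{1,1}-images of ℝⁿ into ℝ^{n+1}: there exists a sequence of maps f_j : ℝⁿ → ℝ^{n+1}, each differentiable with Lipschitz-continuous derivative, such that Γ_s^+ ⊆ ⋃_{j∈ℕ} f_j(ℝⁿ). -/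
/-!
A point `y` of `Γ_s^+` lies on a segment `[x, z]` with `x ∈ ∂Ω` and `u z = ‖z - x‖ = t > s`, at
distance `s` from `x`. Since `u` is `1`-Lipschitz and `u ≤ dist · x`, for `ρ ≤ min s (t - s)` the
ball of radius `ρ` centred on the segment beyond `y` lies in `{u > s}` and the one before `y` lies
in `{u < s}`: the level set `{u = s}` has two-sided touching balls of radius `ρ` at `y`.

Two-sided balls force the normals to be `1/ρ`-Lipschitz and the points to be `ρ`-flat, so the
points of such a level set in a window of size `ρ`, whose normals are close to a direction `e`,
form a graph over `e⊥` carrying a `C^{1,1}` one-jet (height and slope). This jet extends to a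
`C^{1,1}` function on `e⊥` by the Lasry–Lions regularisation: take the infimum `m` of the upper
paraboloids of the jet, then `w = supConv (infConv m (2C)) (2C)`. The inf-convolution keeps `m`
semiconcave with a better constant, so `w` is semiconcave as well as semiconvex, hence `C^{1,1}`,
and both convolutions fix the values of the jet. Countably many windows (dense directions and
centres, radii `1/(k+1)`) cover `Γ_s^+`.
-/

open RealInnerProductSpace Metric Set Filter Topology

section C11

variable {X Y : Type*} [NormedAddCommGroup X] [NormedSpace ℝ X]
  [NormedAddCommGroup Y] [NormedSpace ℝ Y]

def IsC11 (f : X → Y) : Prop :=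
  Differentiable ℝ f ∧ ∃ K, LipschitzWith K (fderiv ℝ f)

lemma isC11_const (c : Y) : IsC11 fun _ : X => c :=
  ⟨differentiable_const c, 0, by
    rw [fderiv_fun_const]; exact LipschitzWith.const (α := X) (0 : X →L[ℝ] Y)⟩

lemma IsC11.linear_add_smul {w : X → ℝ} (hw : IsC11 w) (L : X →L[ℝ] Y) (e : Y) :
    IsC11 fun x => L x + w x • e := by
  obtain ⟨hd, K, hK⟩ := hw
  have hderiv : fderiv ℝ (fun x => L x + w x • e) = fun x => L + (fderiv ℝ w x).smulRight e :=
    funext fun x => (L.hasFDerivAt.add ((hd x).hasFDerivAt.smul_const e)).fderiv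
  refine ⟨L.differentiable.add (hd.smul_const e), K * ‖e‖₊,
    LipschitzWith.of_dist_le_mul fun x y => ?_⟩
  have hsub : (fderiv ℝ w x).smulRight e - (fderiv ℝ w y).smulRight e
      = (fderiv ℝ w x - fderiv ℝ w y).smulRight e := by
    ext; simp [sub_smul]
  rw [hderiv, dist_add_left, dist_eq_norm, hsub, ContinuousLinearMap.norm_smulRight_apply,
    ← dist_eq_norm, NNReal.coe_mul, coe_nnnorm, mul_right_comm]
  exact mul_le_mul_of_nonneg_right (hK.dist_le_mul x y) (norm_nonneg e)

end C11

section Normed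

variable {E : Type*} [NormedAddCommGroup E]

def SemiconcaveWith (α : ℝ) (φ : E → ℝ) : Prop :=
  ∀ x h, φ (x + h) + φ (x - h) ≤ 2 * φ x + α * ‖h‖ ^ 2

noncomputable def infConv (φ : E → ℝ) (c : ℝ) (x : E) : ℝ := ⨅ z, φ z + c * ‖x - z‖ ^ 2

noncomputable def supConv (φ : E → ℝ) (c : ℝ) (x : E) : ℝ := ⨆ y, φ y - c * ‖x - y‖ ^ 2

lemma SemiconcaveWith.mono {α β : ℝ} {φ : E → ℝ} (hφ : SemiconcaveWith α φ) (hαβ : α ≤ β) :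
    SemiconcaveWith β φ := fun x h =>
  (hφ x h).trans (by gcongr)

lemma infConv_le {φ : E → ℝ} {c : ℝ} (hb : ∀ x, BddBelow (range fun z => φ z + c * ‖x - z‖ ^ 2))
    (x z : E) : infConv φ c x ≤ φ z + c * ‖x - z‖ ^ 2 :=
  ciInf_le (hb x) z

lemma infConv_le_self {φ : E → ℝ} {c : ℝ}
    (hb : ∀ x, BddBelow (range fun z => φ z + c * ‖x - z‖ ^ 2)) (x : E) : infConv φ c x ≤ φ x := by
  simpa using infConv_le hb x x

lemma le_supConv {φ : E → ℝ} {c : ℝ} (hb : ∀ x, BddAbove (range fun y => φ y - c * ‖x - y‖ ^ 2))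
    (x y : E) : φ y - c * ‖x - y‖ ^ 2 ≤ supConv φ c x :=
  le_ciSup (hb x) y

lemma SemiconcaveWith.ciInf {ι : Type*} [Nonempty ι] {α : ℝ} {φ : ι → E → ℝ}
    (hφ : ∀ i, SemiconcaveWith α (φ i)) (hb : ∀ y, BddBelow (range fun i => φ i y)) :
    SemiconcaveWith α fun y => ⨅ i, φ i y := by
  intro x h
  have key : ((⨅ i, φ i (x + h)) + (⨅ i, φ i (x - h)) - α * ‖h‖ ^ 2) / 2 ≤ ⨅ i, φ i x := by
    refine le_ciInf fun i => ?_
    have := hφ i x h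
    have h₁ := ciInf_le (hb (x + h)) i
    have h₂ := ciInf_le (hb (x - h)) i
    linarith
  linarith

end Normed

variable {E : Type*} [NormedAddCommGroup E] [InnerProductSpace ℝ E]

lemma norm_sq_le_of_forall_inner_le {d : E} {a b : ℝ} (ha : 0 < a)
    (h : ∀ v, ⟪d, v⟫ ≤ a * ‖v‖ ^ 2 + b) : ‖d‖ ^ 2 ≤ 4 * a * b := by
  have hv := h ((2 * a)⁻¹ • d)
  rw [real_inner_smul_right, real_inner_self_eq_norm_sq, norm_smul, Real.norm_eq_abs,
    abs_of_pos (by positivity), mul_pow] at hv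
  field_simp at hv
  nlinarith

lemma norm_add_sq_le (a b : E) : ‖a + b‖ ^ 2 ≤ 2 * ‖a‖ ^ 2 + 2 * ‖b‖ ^ 2 := by
  nlinarith [parallelogram_law_with_norm ℝ a b, sq_nonneg ‖a - b‖]

lemma hasFDerivAt_of_abs_sub_inner_le {w : E → ℝ} {P x : E} {Λ : ℝ}
    (h : ∀ z, |w z - w x - ⟪P, z - x⟫| ≤ Λ * ‖z - x‖ ^ 2) :
    HasFDerivAt w (innerSL ℝ P) x := by
  rw [hasFDerivAt_iff_isLittleO]
  refine (Asymptotics.IsBigO.of_bound Λ (Eventually.of_forall fun z => ?_)).trans_isLittleO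
    (Asymptotics.isLittleO_pow_sub_sub x one_lt_two)
  simpa using h z

lemma norm_sub_le_of_abs_sub_inner_le {w : E → ℝ} {P : E → E} {Λ : ℝ} (hΛ : 0 < Λ)
    (h : ∀ x z, |w z - w x - ⟪P x, z - x⟫| ≤ Λ * ‖z - x‖ ^ 2) (x y : E) :
    ‖P x - P y‖ ≤ 6 * Λ * ‖x - y‖ := by
  have hinner : ∀ v, ⟪P x - P y, v⟫ ≤ 3 * Λ * ‖v‖ ^ 2 + 3 * Λ * ‖x - y‖ ^ 2 := by
    intro v
    have h₁ := abs_le.1 (h y (y + v))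
    have h₂ := abs_le.1 (h x (y + v))
    have h₃ := abs_le.1 (h x y)
    have hsplit : ⟪P x - P y, v⟫ = ⟪P x, y + v - x⟫ - ⟪P x, y - x⟫ - ⟪P y, y + v - y⟫ := by
      simp only [inner_sub_left, inner_sub_right, inner_add_right]; ring
    have hnorm := norm_add_sq_le v (y - x)
    rw [add_sub_cancel_left] at h₁ hsplit
    rw [show y + v - x = v + (y - x) by abel] at h₂ hsplit
    rw [norm_sub_rev y x] at hnorm h₃
    nlinarith
  have hsq := norm_sq_le_of_forall_inner_le (by positivity) hinner
  exact (pow_le_pow_iff_left₀ (norm_nonneg _) (by positivity) two_ne_zero).1 (by nlinarith)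

lemma isC11_of_abs_sub_inner_le {w : E → ℝ} {P : E → E} {Λ : ℝ} (hΛ : 0 < Λ)
    (h : ∀ x z, |w z - w x - ⟪P x, z - x⟫| ≤ Λ * ‖z - x‖ ^ 2) : IsC11 w := by
  have hw x := hasFDerivAt_of_abs_sub_inner_le (h x)
  refine ⟨fun x => (hw x).differentiableAt, (6 * Λ).toNNReal,
    LipschitzWith.of_dist_le_mul fun x y => ?_⟩
  rw [(hw x).fderiv, (hw y).fderiv, dist_eq_norm, ← map_sub, innerSL_apply_norm, dist_eq_norm,
    Real.coe_toNNReal _ (by positivity)]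
  exact norm_sub_le_of_abs_sub_inner_le hΛ h x y

lemma exists_abs_sub_inner_le [CompleteSpace E] {φ : E → ℝ} {Λ : ℝ} (hΛ : 0 < Λ)
    (h : ∀ ε > 0, ∃ P : E, ∀ v, |φ v - ⟪P, v⟫| ≤ ε + Λ * ‖v‖ ^ 2) :
    ∃ P : E, ∀ v, |φ v - ⟪P, v⟫| ≤ Λ * ‖v‖ ^ 2 := by
  choose P hP using fun k : ℕ => h (1 / (k + 1)) Nat.one_div_pos_of_nat
  have hclose : ∀ k l : ℕ, k ≤ l → dist (P k) (P l) ≤ √(16 * Λ * (1 / (k + 1))) := by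
    intro k l hkl
    have hsq := norm_sq_le_of_forall_inner_le (d := P k - P l) (a := 2 * Λ)
      (b := 1 / (k + 1) + 1 / (l + 1)) (by positivity) fun v => by
        have h₁ := abs_le.1 (hP k v)
        have h₂ := abs_le.1 (hP l v)
        rw [inner_sub_left]; linarith
    have hkl' : (1 : ℝ) / (l + 1) ≤ 1 / (k + 1) := by gcongr
    rw [dist_eq_norm]
    exact Real.le_sqrt_of_sq_le (by nlinarith)
  have hlim : Tendsto (fun k : ℕ => √(16 * Λ * (1 / (k + 1)))) atTop (𝓝 0) := by
    simpa using ((tendsto_one_div_add_atTop_nhds_zero_nat.const_mul (16 * Λ)).sqrt)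
  obtain ⟨P₀, hP₀⟩ := cauchySeq_tendsto_of_complete (cauchySeq_of_le_tendsto_0' _ hclose hlim)
  refine ⟨P₀, fun v => le_of_tendsto_of_tendsto' (b := atTop) ?_ ?_ fun k => hP k v⟩
  · exact (tendsto_const_nhds.sub (hP₀.inner tendsto_const_nhds)).abs
  · simpa using tendsto_one_div_add_atTop_nhds_zero_nat.add_const (Λ * ‖v‖ ^ 2)

lemma semiconcaveWith_paraboloid (a C : ℝ) (P z : E) :
    SemiconcaveWith (2 * C) fun y => a + ⟪P, y - z⟫ + C * ‖y - z‖ ^ 2 := by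
  intro x h
  have hpar := parallelogram_law_with_norm ℝ (x - z) h
  dsimp only
  rw [show x + h - z = x - z + h by abel, show x - h - z = x - z - h by abel, inner_add_right P,
    inner_sub_right P (x - z) h]
  linear_combination C * hpar

lemma neg_div_le_inner_add_mul_norm_sq {δ : ℝ} (hδ : 0 < δ) (v u : E) :
    -(‖v‖ ^ 2 / (4 * δ)) ≤ ⟪v, u⟫ + δ * ‖u‖ ^ 2 := by
  have h := norm_add_sq_real v ((2 * δ) • u)
  rw [real_inner_smul_right, norm_smul, Real.norm_eq_abs, abs_of_pos (by positivity)] at h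
  rw [neg_le, le_div_iff₀ (by positivity)]
  nlinarith [sq_nonneg ‖v + (2 * δ) • u‖]

lemma bddBelow_range_infConv {φ : E → ℝ} {a k c : ℝ} {q z₀ : E}
    (hφ : ∀ z, a + ⟪q, z - z₀⟫ - k * ‖z - z₀‖ ^ 2 ≤ φ z) (hkc : k < c) (x : E) :
    BddBelow (range fun z => φ z + c * ‖x - z‖ ^ 2) := by
  refine ⟨a + c * ‖x - z₀‖ ^ 2 - ‖q - (2 * c) • (x - z₀)‖ ^ 2 / (4 * (c - k)),
    forall_mem_range.2 fun z => ?_⟩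
  have h := neg_div_le_inner_add_mul_norm_sq (sub_pos.2 hkc) (q - (2 * c) • (x - z₀)) (z - z₀)
  have hsq := norm_sub_sq_real (x - z₀) (z - z₀)
  rw [show x - z₀ - (z - z₀) = x - z by abel] at hsq
  rw [inner_sub_left, real_inner_smul_left] at h
  rw [hsq]
  linarith [hφ z]

lemma bddAbove_range_supConv {φ : E → ℝ} {a k c : ℝ} {q z₀ : E}
    (hφ : ∀ y, φ y ≤ a + ⟪q, y - z₀⟫ + k * ‖y - z₀‖ ^ 2) (hkc : k < c) (x : E) :
    BddAbove (range fun y => φ y - c * ‖x - y‖ ^ 2) := by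
  refine ⟨a - c * ‖x - z₀‖ ^ 2 + ‖-q - (2 * c) • (x - z₀)‖ ^ 2 / (4 * (c - k)),
    forall_mem_range.2 fun y => ?_⟩
  have h := neg_div_le_inner_add_mul_norm_sq (sub_pos.2 hkc) (-q - (2 * c) • (x - z₀)) (y - z₀)
  have hsq := norm_sub_sq_real (x - z₀) (y - z₀)
  rw [show x - z₀ - (y - z₀) = x - y by abel] at hsq
  rw [inner_sub_left, inner_neg_left, real_inner_smul_left] at h
  rw [hsq]
  linarith [hφ y]

lemma semiconcaveWith_infConv {φ : E → ℝ} {α c : ℝ} (hφ : SemiconcaveWith α φ)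
    (hb : ∀ x, BddBelow (range fun z => φ z + c * ‖x - z‖ ^ 2)) (t : ℝ) :
    SemiconcaveWith (α * t ^ 2 + 2 * c * (1 - t) ^ 2) (infConv φ c) := by
  intro x h
  have key : (infConv φ c (x + h) + infConv φ c (x - h)
      - (α * t ^ 2 + 2 * c * (1 - t) ^ 2) * ‖h‖ ^ 2) / 2 ≤ infConv φ c x := by
    refine le_ciInf fun z => ?_
    have h₁ := infConv_le hb (x + h) (z + t • h)
    have h₂ := infConv_le hb (x - h) (z - t • h)
    have hz := hφ z (t • h)
    have hpar := parallelogram_law_with_norm ℝ (x - z) ((1 - t) • h)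
    rw [show x + h - (z + t • h) = x - z + (1 - t) • h by module,
      show x - h - (z - t • h) = x - z - (1 - t) • h by module] at *
    simp only [norm_smul, Real.norm_eq_abs, mul_pow, sq_abs] at hz hpar
    linear_combination (h₁ + h₂ + hz + c * hpar) / 2
  linarith

lemma mul_norm_sq_sub_mul_norm_sub_sq_le {α β c : ℝ} (hc : α < 2 * c)
    (hβ : 2 * α * c ≤ β * (2 * c - α)) (h k : E) : α * ‖k‖ ^ 2 - 2 * c * ‖h - k‖ ^ 2 ≤ β * ‖h‖ ^ 2 := by
  have hsq := norm_sub_sq_real ((2 * c - α) • k) ((2 * c) • h)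
  have hhk := norm_sub_sq_real h k
  simp only [norm_smul, Real.norm_eq_abs, mul_pow, sq_abs, real_inner_smul_left,
    real_inner_smul_right, real_inner_comm h k] at hsq
  have key : 0 ≤ (2 * c - α) * (β * ‖h‖ ^ 2 - α * ‖k‖ ^ 2 + 2 * c * ‖h - k‖ ^ 2) := by
    rw [hhk]
    nlinarith [sq_nonneg ‖(2 * c - α) • k - (2 * c) • h‖,
      mul_le_mul_of_nonneg_right hβ (sq_nonneg ‖h‖)]
  linarith [(mul_nonneg_iff_of_pos_left (by linarith : 0 < 2 * c - α)).1 key]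

lemma semiconcaveWith_supConv {φ : E → ℝ} {α β c : ℝ} (hφ : SemiconcaveWith α φ)
    (hb : ∀ x, BddAbove (range fun y => φ y - c * ‖x - y‖ ^ 2)) (hc : α < 2 * c)
    (hβ : 2 * α * c ≤ β * (2 * c - α)) : SemiconcaveWith β (supConv φ c) := by
  intro x h
  have key : ∀ y₁ y₂, (φ y₁ - c * ‖x + h - y₁‖ ^ 2) + (φ y₂ - c * ‖x - h - y₂‖ ^ 2)
      ≤ 2 * supConv φ c x + β * ‖h‖ ^ 2 := by
    intro y₁ y₂
    set y := (1 / 2 : ℝ) • (y₁ + y₂)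
    set k := (1 / 2 : ℝ) • (y₁ - y₂)
    have hy := hφ y k
    rw [show y + k = y₁ by module, show y - k = y₂ by module] at hy
    have hpar := parallelogram_law_with_norm ℝ (x - y) (h - k)
    rw [show x - y + (h - k) = x + h - y₁ by module, show x - y - (h - k) = x - h - y₂ by module]
      at hpar
    have hw := le_supConv hb x y
    have hq := mul_norm_sq_sub_mul_norm_sub_sq_le hc hβ h k
    linear_combination hy + 2 * hw + hq - c * hpar
  have h₁ : ∀ y₂, supConv φ c (x + h) + (φ y₂ - c * ‖x - h - y₂‖ ^ 2)
      ≤ 2 * supConv φ c x + β * ‖h‖ ^ 2 := fun y₂ =>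
    le_sub_iff_add_le.1 (ciSup_le fun y₁ => le_sub_iff_add_le.2 (key y₁ y₂))
  exact le_sub_iff_add_le'.1 (ciSup_le fun y₂ => le_sub_iff_add_le'.2 (h₁ y₂))

lemma exists_le_supConv_add {φ : E → ℝ} {c ε : ℝ}
    (hb : ∀ x, BddAbove (range fun y => φ y - c * ‖x - y‖ ^ 2)) (x : E) (hε : 0 < ε) :
    ∃ P : E, ∀ v, supConv φ c x - ε + ⟪P, v⟫ - c * ‖v‖ ^ 2 ≤ supConv φ c (x + v) := by
  obtain ⟨y, hy⟩ := exists_lt_of_lt_ciSup (sub_lt_self (supConv φ c x) hε)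
  refine ⟨(2 * c) • (y - x), fun v => (le_supConv hb (x + v) y).trans' ?_⟩
  have hsq := norm_add_sq_real (x - y) v
  rw [show x - y + v = x + v - y by abel] at hsq
  rw [real_inner_smul_left, ← neg_sub x y, inner_neg_left]
  linear_combination hy.le + c * hsq

lemma SemiconcaveWith.abs_sub_inner_le {ψ : E → ℝ} {β c ε : ℝ} {x P : E}
    (hψ : SemiconcaveWith β ψ) (hβ : 0 ≤ β)
    (hP : ∀ v, ψ x - ε + ⟪P, v⟫ - c * ‖v‖ ^ 2 ≤ ψ (x + v)) (v : E) :
    |ψ (x + v) - ψ x - ⟪P, v⟫| ≤ ε + (β + c) * ‖v‖ ^ 2 := by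
  have h₁ := hP v
  have h₂ := hP (-v)
  simp only [inner_neg_right, norm_neg, ← sub_eq_add_neg] at h₂
  have h₃ := hψ x v
  rw [abs_le]
  constructor <;> nlinarith [sq_nonneg ‖v‖]

theorem isC11_supConv [CompleteSpace E] {φ : E → ℝ} {α c : ℝ} (hφ : SemiconcaveWith α φ)
    (hb : ∀ x, BddAbove (range fun y => φ y - c * ‖x - y‖ ^ 2)) (hα : 0 ≤ α) (hc : α < 2 * c) :
    IsC11 (supConv φ c) := by
  have hD : 0 < 2 * c - α := by linarith
  set β := 2 * α * c / (2 * c - α)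
  have hβ : 0 ≤ β := div_nonneg (by nlinarith) hD.le
  have hsc := semiconcaveWith_supConv hφ hb hc (div_mul_cancel₀ _ hD.ne').ge
  have hΛ : 0 < β + c := by linarith
  choose P hP using fun x =>
    exists_abs_sub_inner_le (φ := fun v => supConv φ c (x + v) - supConv φ c x) hΛ fun ε hε =>
      (exists_le_supConv_add hb x hε).imp fun P hP => hsc.abs_sub_inner_le hβ hP
  exact isC11_of_abs_sub_inner_le hΛ fun x z => by simpa using hP x (z - x)

lemma paraboloid_le_paraboloid {K L C a b : ℝ} {P Q x₁ x₂ : E} (hK : 0 ≤ K) (hL : 0 ≤ L)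
    (hC : 3 * K + 2 * L ≤ C) (hab : |b - a - ⟪P, x₂ - x₁⟫| ≤ K * ‖x₂ - x₁‖ ^ 2)
    (hPQ : ‖P - Q‖ ≤ L * ‖x₁ - x₂‖) (y : E) :
    a + ⟪P, y - x₁⟫ - C * ‖y - x₁‖ ^ 2 ≤ b + ⟪Q, y - x₂⟫ + C * ‖y - x₂‖ ^ 2 := by
  have hsplit : ⟪P, y - x₁⟫ - ⟪Q, y - x₂⟫ = ⟪P, x₂ - x₁⟫ + ⟪P - Q, y - x₂⟫ := by
    rw [inner_sub_left, ← add_sub_assoc, ← inner_add_right,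
      show x₂ - x₁ + (y - x₂) = y - x₁ by abel]
  have hinner : ⟪P - Q, y - x₂⟫ ≤ L * ‖x₂ - x₁‖ * ‖y - x₂‖ := by
    rw [norm_sub_rev x₂]
    exact (real_inner_le_norm _ _).trans (mul_le_mul_of_nonneg_right hPQ (norm_nonneg _))
  have hsq := norm_add_sq_le (y - x₁) (-(y - x₂))
  rw [norm_neg, show y - x₁ + -(y - x₂) = x₂ - x₁ by abel] at hsq
  have hamgm := two_mul_le_add_sq ‖x₂ - x₁‖ ‖y - x₂‖
  have hpos : 0 ≤ ‖y - x₁‖ ^ 2 + ‖y - x₂‖ ^ 2 := by positivity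
  nlinarith [(abs_le.1 hab).1, mul_le_mul_of_nonneg_left hsq hK, mul_le_mul_of_nonneg_left hamgm hL,
    mul_le_mul_of_nonneg_right hC hpos]

lemma supConv_infConv_eq {m : E → ℝ} {a C : ℝ} {P x₀ : E} (hC : 0 < C)
    (hlow : ∀ y, a + ⟪P, y - x₀⟫ - C * ‖y - x₀‖ ^ 2 ≤ m y)
    (hup : ∀ y, m y ≤ a + ⟪P, y - x₀⟫ + C * ‖y - x₀‖ ^ 2) :
    supConv (infConv m (2 * C)) (2 * C) x₀ = a := by
  have hgb := bddBelow_range_infConv hlow (by linarith : C < 2 * C)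
  have hwb := bddAbove_range_supConv (fun y => (infConv_le_self hgb y).trans (hup y))
    (by linarith : C < 2 * C)
  apply le_antisymm
  · refine ciSup_le fun y => ?_
    -- `x₀ + u` minimises `z ↦ a + ⟪P, z - x₀⟫ + C‖z - x₀‖² + 2C‖y - z‖²`
    set u := (2 / 3 : ℝ) • (y - x₀) - (6 * C)⁻¹ • P
    have h₁ := infConv_le hgb y (x₀ + u)
    have h₂ := hup (x₀ + u)
    rw [add_sub_cancel_left] at h₂
    have hid : ⟪P, u⟫ + C * ‖u‖ ^ 2 + 2 * C * ‖y - (x₀ + u)‖ ^ 2 - 2 * C * ‖x₀ - y‖ ^ 2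
        = -(C / 3) * ‖(2 : ℝ) • (y - x₀) - (2 * C)⁻¹ • P‖ ^ 2 := by
      rw [show y - (x₀ + u) = (1 / 3 : ℝ) • (y - x₀) + (6 * C)⁻¹ • P by module,
        show x₀ - y = -(y - x₀) by abel]
      simp only [u, ← real_inner_self_eq_norm_sq, inner_add_left, inner_add_right, inner_sub_left,
        inner_sub_right, inner_neg_left, inner_neg_right, real_inner_smul_left,
        real_inner_smul_right, real_inner_comm P (y - x₀)]
      field_simp
      ring
    nlinarith [sq_nonneg ‖(2 : ℝ) • (y - x₀) - (2 * C)⁻¹ • P‖]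
  · set q := (4 * C)⁻¹ • P
    refine le_trans ?_ (le_supConv hwb x₀ (x₀ + q))
    have hg : a + 2 * C * ‖q‖ ^ 2 ≤ infConv m (2 * C) (x₀ + q) := by
      refine le_ciInf fun z => ?_
      have hid : ⟪P, z - x₀⟫ - C * ‖z - x₀‖ ^ 2 + 2 * C * ‖x₀ + q - z‖ ^ 2 - 2 * C * ‖q‖ ^ 2
          = C * ‖z - x₀‖ ^ 2 := by
        rw [show x₀ + q - z = q - (z - x₀) by abel]
        generalize z - x₀ = w
        simp only [q, ← real_inner_self_eq_norm_sq, inner_sub_left, inner_sub_right,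
          real_inner_smul_left, real_inner_smul_right, real_inner_comm P w]
        field_simp
        ring
      nlinarith [hlow z, sq_nonneg ‖z - x₀‖]
    rw [show x₀ - (x₀ + q) = -q by abel, norm_neg]
    linarith

theorem exists_isC11_extension [CompleteSpace E] {ι : Type*} (x : ι → E) (f : ι → ℝ) (p : ι → E)
    {K L : ℝ} (hK : 0 ≤ K) (hL : 0 ≤ L)
    (hf : ∀ i j, |f j - f i - ⟪p i, x j - x i⟫| ≤ K * ‖x j - x i‖ ^ 2)
    (hp : ∀ i j, ‖p i - p j‖ ≤ L * ‖x i - x j‖) :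
    ∃ w : E → ℝ, IsC11 w ∧ ∀ i, w (x i) = f i := by
  rcases isEmpty_or_nonempty ι with hι | hι
  · exact ⟨fun _ => 0, isC11_const 0, isEmptyElim⟩
  obtain ⟨i₀⟩ := id hι
  set C := 3 * K + 2 * L + 1
  have hC : 0 < C := by positivity
  have hdom : ∀ i j y, f i + ⟪p i, y - x i⟫ - C * ‖y - x i‖ ^ 2
      ≤ f j + ⟪p j, y - x j⟫ + C * ‖y - x j‖ ^ 2 := fun i j =>
    paraboloid_le_paraboloid hK hL (by linarith) (hf i j) (hp i j)
  have hbdd : ∀ y, BddBelow (range fun j => f j + ⟪p j, y - x j⟫ + C * ‖y - x j‖ ^ 2) :=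
    fun y => ⟨_, forall_mem_range.2 (hdom i₀ · y)⟩
  set m : E → ℝ := fun y => ⨅ j, f j + ⟪p j, y - x j⟫ + C * ‖y - x j‖ ^ 2
  have hlow : ∀ i y, f i + ⟪p i, y - x i⟫ - C * ‖y - x i‖ ^ 2 ≤ m y :=
    fun i y => le_ciInf (hdom i · y)
  have hup : ∀ i y, m y ≤ f i + ⟪p i, y - x i⟫ + C * ‖y - x i‖ ^ 2 :=
    fun i y => ciInf_le (hbdd y) i
  have hm : SemiconcaveWith (2 * C) m :=
    .ciInf (fun j => semiconcaveWith_paraboloid (f j) C (p j) (x j)) hbdd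
  have hgb := bddBelow_range_infConv (hlow i₀) (by linarith : C < 2 * C)
  -- `t = 2/3` minimises the constant `2C t² + 4C (1 - t)²`
  have hg : SemiconcaveWith (4 / 3 * C) (infConv m (2 * C)) :=
    (semiconcaveWith_infConv hm hgb (2 / 3)).mono (le_of_eq (by ring))
  refine ⟨supConv (infConv m (2 * C)) (2 * C), isC11_supConv hg ?_ (by positivity) (by linarith),
    fun i => supConv_infConv_eq hC (hlow i) (hup i)⟩
  exact bddAbove_range_supConv (fun y => (infConv_le_self hgb y).trans (hup i₀ y))
    (by linarith : C < 2 * C)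

def HasTwoSidedBalls (u : E → ℝ) (s ρ : ℝ) (y v : E) : Prop :=
  ball (y + ρ • v) ρ ⊆ {w | s < u w} ∧ ball (y - ρ • v) ρ ⊆ {w | u w < s}

lemma two_mul_abs_inner_le_of_notMem_balls {y y' v : E} {ρ : ℝ} (hρ : 0 ≤ ρ) (hv : ‖v‖ = 1)
    (h₁ : y' ∉ ball (y + ρ • v) ρ) (h₂ : y' ∉ ball (y - ρ • v) ρ) :
    2 * ρ * |⟪y' - y, v⟫| ≤ ‖y' - y‖ ^ 2 := by
  rw [mem_ball, not_lt, dist_eq_norm] at h₁ h₂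
  rw [show y' - (y + ρ • v) = y' - y - ρ • v by abel] at h₁
  rw [show y' - (y - ρ • v) = y' - y + ρ • v by abel] at h₂
  replace h₁ := pow_le_pow_left₀ hρ h₁ 2
  replace h₂ := pow_le_pow_left₀ hρ h₂ 2
  generalize y' - y = d at h₁ h₂ ⊢
  simp only [norm_sub_sq_real, norm_add_sq_real, real_inner_smul_right, norm_smul,
    Real.norm_eq_abs, abs_of_nonneg hρ, hv, mul_one] at h₁ h₂
  have h : |2 * ρ * ⟪d, v⟫| ≤ ‖d‖ ^ 2 := abs_le.2 ⟨by linarith, by linarith⟩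
  rwa [abs_mul, abs_of_nonneg (by positivity : 0 ≤ 2 * ρ)] at h

lemma mul_norm_sub_le_of_disjoint_balls {y₁ y₂ v₁ v₂ : E} {ρ : ℝ} (hρ : 0 < ρ)
    (hv₁ : ‖v₁‖ = 1) (hv₂ : ‖v₂‖ = 1)
    (h₁ : Disjoint (ball (y₁ + ρ • v₁) ρ) (ball (y₂ - ρ • v₂) ρ))
    (h₂ : Disjoint (ball (y₂ + ρ • v₂) ρ) (ball (y₁ - ρ • v₁) ρ)) :
    ρ * ‖v₁ - v₂‖ ≤ ‖y₁ - y₂‖ := by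
  rw [disjoint_ball_ball_iff hρ hρ, dist_eq_norm] at h₁ h₂
  rw [show y₁ + ρ • v₁ - (y₂ - ρ • v₂) = y₁ - y₂ + ρ • (v₁ + v₂) by module] at h₁
  rw [show y₂ + ρ • v₂ - (y₁ - ρ • v₁) = -(y₁ - y₂ - ρ • (v₁ + v₂)) by module, norm_neg] at h₂
  have h₁' := pow_le_pow_left₀ (by positivity) h₁ 2
  have h₂' := pow_le_pow_left₀ (by positivity) h₂ 2
  have hpar := parallelogram_law_with_norm ℝ (y₁ - y₂) (ρ • (v₁ + v₂))
  have hpar' := parallelogram_law_with_norm ℝ v₁ v₂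
  rw [norm_smul, Real.norm_eq_abs, abs_of_pos hρ] at hpar
  rw [hv₁, hv₂] at hpar'
  refine (pow_le_pow_iff_left₀ (by positivity) (norm_nonneg _) two_ne_zero).1 ?_
  nlinarith

section Graph

variable {F : Type*} [NormedAddCommGroup F] [InnerProductSpace ℝ F] {L : F →ₗᵢ[ℝ] E} {β : E → F}
  {e : E}

/- When `L ∘ β` is the orthogonal projection onto `e⊥`, the hyperplane `v⊥` is the graph over `e⊥`
of the linear function with gradient `tangentSlope β e v`. -/
noncomputable def tangentSlope (β : E → F) (e v : E) : F := -(⟪e, v⟫)⁻¹ • β v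

lemma map_base_sub (hLβ : ∀ y, L (β y) = y - ⟪e, y⟫ • e) (y y' : E) :
    L (β y' - β y) = y' - y - ⟪e, y' - y⟫ • e := by
  rw [map_sub, hLβ, hLβ, inner_sub_right, sub_smul]
  abel

lemma norm_base_sub_sq (he : ‖e‖ = 1) (hLβ : ∀ y, L (β y) = y - ⟪e, y⟫ • e) (y y' : E) :
    ‖β y' - β y‖ ^ 2 = ‖y' - y‖ ^ 2 - ⟪e, y' - y⟫ ^ 2 := by
  rw [← L.norm_map, map_base_sub hLβ, norm_sub_sq_real, real_inner_smul_right, norm_smul,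
    Real.norm_eq_abs, he, real_inner_comm]
  ring_nf
  rw [sq_abs]
  ring

lemma map_tangentSlope (hLβ : ∀ y, L (β y) = y - ⟪e, y⟫ • e) {v : E} (hv : ⟪e, v⟫ ≠ 0) :
    L (tangentSlope β e v) = e - (⟪e, v⟫)⁻¹ • v := by
  rw [tangentSlope, map_smul, hLβ, smul_sub, smul_smul, neg_mul, inv_mul_cancel₀ hv]
  module

lemma inner_tangentSlope_base_sub (he : ‖e‖ = 1) (hLβ : ∀ y, L (β y) = y - ⟪e, y⟫ • e) {v : E}
    (hv : ⟪e, v⟫ ≠ 0) (y y' : E) :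
    ⟪tangentSlope β e v, β y' - β y⟫ = ⟪e, y' - y⟫ - (⟪e, v⟫)⁻¹ * ⟪v, y' - y⟫ := by
  rw [← L.inner_map_map, map_tangentSlope hLβ hv, map_base_sub hLβ]
  generalize y' - y = d
  simp only [inner_sub_left, inner_sub_right, real_inner_smul_left, real_inner_smul_right,
    real_inner_self_eq_norm_sq, he, real_inner_comm e v]
  field_simp
  ring

lemma three_quarters_le_inner (he : ‖e‖ = 1) {v : E} (hv : ‖v - e‖ ≤ 1 / 4) :
    3 / 4 ≤ ⟪e, v⟫ := by
  have h := (abs_le.1 (abs_real_inner_le_norm e (v - e))).1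
  rw [inner_sub_right, real_inner_self_eq_norm_sq, he] at h
  nlinarith

lemma norm_tangentSlope_sub_le (hLβ : ∀ y, L (β y) = y - ⟪e, y⟫ • e) (he : ‖e‖ = 1) {v v' : E}
    (hv : ‖v‖ = 1) (hve : 3 / 4 ≤ ⟪e, v⟫) (hve' : 3 / 4 ≤ ⟪e, v'⟫) :
    ‖tangentSlope β e v - tangentSlope β e v'‖ ≤ 28 / 9 * ‖v - v'‖ := by
  set a := ⟪e, v⟫ with ha_def
  set b := ⟪e, v'⟫ with hb_def
  have ha : 0 < a := by linarith
  have hb : 0 < b := by linarith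
  have hb_inv : b⁻¹ ≤ 4 / 3 := by simpa using inv_anti₀ (by norm_num) hve'
  have hab : |b⁻¹ - a⁻¹| ≤ 16 / 9 * ‖v - v'‖ := by
    have hab' : |a - b| ≤ ‖v - v'‖ := by
      simpa [ha_def, hb_def, ← inner_sub_right, he] using abs_real_inner_le_norm e (v - v')
    rw [inv_sub_inv hb.ne' ha.ne', abs_div, abs_of_pos (mul_pos hb ha),
      div_le_iff₀ (mul_pos hb ha)]
    have hba : 9 / 16 ≤ b * a := by nlinarith
    nlinarith [mul_le_mul_of_nonneg_left hba (norm_nonneg (v - v'))]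
  rw [← L.norm_map, map_sub, map_tangentSlope hLβ ha.ne', map_tangentSlope hLβ hb.ne',
    show e - a⁻¹ • v - (e - b⁻¹ • v') = (b⁻¹ - a⁻¹) • v - b⁻¹ • (v - v') by module]
  calc ‖(b⁻¹ - a⁻¹) • v - b⁻¹ • (v - v')‖ ≤ |b⁻¹ - a⁻¹| + b⁻¹ * ‖v - v'‖ := by
        refine (norm_sub_le _ _).trans_eq ?_
        rw [norm_smul, norm_smul, hv, mul_one, Real.norm_eq_abs, Real.norm_eq_abs,
          abs_of_pos (inv_pos.2 hb)]
    _ ≤ 28 / 9 * ‖v - v'‖ := by nlinarith [norm_nonneg (v - v')]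

lemma norm_sub_le_two_mul_norm_base_sub (he : ‖e‖ = 1) (hLβ : ∀ y, L (β y) = y - ⟪e, y⟫ • e)
    {y y' v : E} (hve : ‖v - e‖ ≤ 1 / 4) (hyv : 4 * |⟪y' - y, v⟫| ≤ ‖y' - y‖) :
    ‖y' - y‖ ≤ 2 * ‖β y' - β y‖ := by
  have he_inner : |⟪e, y' - y⟫| ≤ 1 / 2 * ‖y' - y‖ := by
    have h := abs_real_inner_le_norm (e - v) (y' - y)
    rw [norm_sub_rev] at h
    rw [show e = (e - v) + v by abel, inner_add_left]
    calc |⟪e - v, y' - y⟫ + ⟪v, y' - y⟫| ≤ |⟪e - v, y' - y⟫| + |⟪v, y' - y⟫| := abs_add_le _ _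
      _ ≤ 1 / 2 * ‖y' - y‖ := by
        rw [real_inner_comm (y' - y) v]
        nlinarith [norm_nonneg (y' - y)]
  have hsq := norm_base_sub_sq he hLβ y y'
  have he_sq : ⟪e, y' - y⟫ ^ 2 ≤ (1 / 2 * ‖y' - y‖) ^ 2 := by
    rw [← sq_abs]; exact pow_le_pow_left₀ (abs_nonneg _) he_inner 2
  refine (pow_le_pow_iff_left₀ (norm_nonneg _) (by positivity) two_ne_zero).1 ?_
  nlinarith

lemma abs_sub_inner_tangentSlope_le (he : ‖e‖ = 1) (hLβ : ∀ y, L (β y) = y - ⟪e, y⟫ • e)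
    {y y' v : E} {ρ : ℝ} (hρ : 0 < ρ) (hve : 3 / 4 ≤ ⟪e, v⟫)
    (hyv : 2 * ρ * |⟪y' - y, v⟫| ≤ ‖y' - y‖ ^ 2) (hβ : ‖y' - y‖ ≤ 2 * ‖β y' - β y‖) :
    |⟪e, y'⟫ - ⟪e, y⟫ - ⟪tangentSlope β e v, β y' - β y⟫| ≤ 3 / ρ * ‖β y' - β y‖ ^ 2 := by
  have hv : 0 < ⟪e, v⟫ := by linarith
  rw [inner_tangentSlope_base_sub he hLβ hv.ne', ← inner_sub_right, sub_sub_cancel, abs_mul,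
    abs_inv, abs_of_pos hv, real_inner_comm (y' - y) v, div_mul_eq_mul_div, le_div_iff₀ hρ]
  have hinv : (⟪e, v⟫)⁻¹ ≤ 4 / 3 := by simpa using inv_anti₀ (by norm_num) hve
  have hβ_sq : ‖y' - y‖ ^ 2 ≤ 4 * ‖β y' - β y‖ ^ 2 := by
    nlinarith [pow_le_pow_left₀ (norm_nonneg _) hβ 2]
  nlinarith [mul_le_mul_of_nonneg_right hinv (by positivity : 0 ≤ |⟪y' - y, v⟫| * ρ),
    inv_pos.2 hv, abs_nonneg ⟪y' - y, v⟫]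

theorem exists_isC11_graph [CompleteSpace F] (he : ‖e‖ = 1)
    (hLβ : ∀ y, L (β y) = y - ⟪e, y⟫ • e) {ι : Type*} (y ν : ι → E) {ρ : ℝ} (hρ : 0 < ρ)
    (hν : ∀ i, ‖ν i‖ = 1) (hνe : ∀ i, ‖ν i - e‖ ≤ 1 / 4)
    (hyν : ∀ i j, 2 * ρ * |⟪y j - y i, ν i⟫| ≤ ‖y j - y i‖ ^ 2)
    (hνy : ∀ i j, ρ * ‖ν i - ν j‖ ≤ ‖y i - y j‖) (hdiam : ∀ i j, ‖y j - y i‖ ≤ ρ / 2) :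
    ∃ G : F → E, IsC11 G ∧ ∀ i, y i ∈ range G := by
  have hνe' i : 3 / 4 ≤ ⟪e, ν i⟫ := three_quarters_le_inner he (hνe i)
  have hβ : ∀ i j, ‖y j - y i‖ ≤ 2 * ‖β (y j) - β (y i)‖ := by
    refine fun i j => norm_sub_le_two_mul_norm_base_sub he hLβ (hνe i) ?_
    have h := mul_le_mul_of_nonneg_left (hdiam i j) (norm_nonneg (y j - y i))
    refine le_of_mul_le_mul_left ?_ hρ
    nlinarith [hyν i j]
  have hslope : ∀ i j, ‖tangentSlope β e (ν i) - tangentSlope β e (ν j)‖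
      ≤ 7 / ρ * ‖β (y i) - β (y j)‖ := by
    intro i j
    have h₁ := norm_tangentSlope_sub_le hLβ he (hν i) (hνe' i) (hνe' j)
    rw [div_mul_eq_mul_div, le_div_iff₀ hρ]
    nlinarith [hνy i j, hβ j i, norm_nonneg (ν i - ν j)]
  obtain ⟨w, hw, hwy⟩ := exists_isC11_extension (fun i => β (y i)) (fun i => ⟪e, y i⟫)
    (fun i => tangentSlope β e (ν i)) (by positivity : 0 ≤ 3 / ρ) (by positivity : 0 ≤ 7 / ρ)
    (fun i j => abs_sub_inner_tangentSlope_le he hLβ hρ (hνe' i) (hyν i j) (hβ i j)) hslope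
  refine ⟨fun x => L x + w x • e, hw.linear_add_smul L.toContinuousLinearMap e,
    fun i => ⟨β (y i), ?_⟩⟩
  simp only [hLβ, hwy, sub_add_cancel]

end Graph

theorem exists_isC11_cover_levelSet {F : Type*} [NormedAddCommGroup F] [InnerProductSpace ℝ F]
    [CompleteSpace F] {L : F →ₗᵢ[ℝ] E} {β : E → F} {e : E} (he : ‖e‖ = 1)
    (hLβ : ∀ y, L (β y) = y - ⟪e, y⟫ • e) (u : E → ℝ) (s : ℝ) {ρ : ℝ} (hρ : 0 < ρ) (q : E) :
    ∃ G : F → E, IsC11 G ∧ ∀ y v, y ∈ ball q (ρ / 4) → u y = s → ‖v‖ = 1 → ‖v - e‖ ≤ 1 / 4 →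
      HasTwoSidedBalls u s ρ y v → y ∈ range G := by
  let ι := {yv : E × E // yv.1 ∈ ball q (ρ / 4) ∧ u yv.1 = s ∧ ‖yv.2‖ = 1 ∧ ‖yv.2 - e‖ ≤ 1 / 4 ∧
    HasTwoSidedBalls u s ρ yv.1 yv.2}
  have hsep : Disjoint {w | s < u w} {w | u w < s} :=
    disjoint_left.2 fun w (h₁ : s < u w) (h₂ : u w < s) => lt_asymm h₁ h₂
  obtain ⟨G, hG, hcover⟩ := exists_isC11_graph (ι := ι) he hLβ (fun i => i.1.1) (fun i => i.1.2) hρ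
    (fun i => i.2.2.2.1) (fun i => i.2.2.2.2.1)
    (fun ⟨_, _, _, hv, _, hbo, hbi⟩ ⟨_, _, hu', _⟩ => two_mul_abs_inner_le_of_notMem_balls hρ.le hv
      (fun h => (hbo h).ne' hu') (fun h => (hbi h).ne hu'))
    (fun ⟨_, _, _, hv, _, hbo, hbi⟩ ⟨_, _, _, hv', _, hbo', hbi'⟩ =>
      mul_norm_sub_le_of_disjoint_balls hρ hv hv' (hsep.mono hbo hbi') (hsep.mono hbo' hbi))
    (fun ⟨⟨y, _⟩, hq, _⟩ ⟨⟨y', _⟩, hq', _⟩ => by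
      rw [← dist_eq_norm]
      linarith [dist_triangle_right y' y q, mem_ball.1 hq, mem_ball.1 hq'])
  exact ⟨G, hG, fun y v hq hu hv hve hb => hcover ⟨(y, v), hq, hu, hv, hve, hb⟩⟩

lemma hasTwoSidedBalls_of_segment {u : E → ℝ} (hu : LipschitzWith 1 u) {x v : E} (hv : ‖v‖ = 1)
    (hx : ∀ w, u w ≤ dist w x) {s t ρ : ℝ} (ht : t ≤ u (x + t • v)) (hρ : 0 ≤ ρ) (hρs : ρ ≤ s)
    (hρt : ρ ≤ t - s) :
    u (x + s • v) = s ∧ HasTwoSidedBalls u s ρ (x + s • v) v := by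
  have hdist : ∀ a b : ℝ, dist (x + a • v) (x + b • v) = |a - b| := fun a b => by
    rw [dist_add_left, dist_eq_norm, ← sub_smul, norm_smul, hv, mul_one, Real.norm_eq_abs]
  have hdist₀ : ∀ a : ℝ, dist (x + a • v) x = |a| := fun a => by
    simpa using hdist a 0
  have hlip : ∀ w, t ≤ u w + dist (x + t • v) w := fun w => by
    simpa using ht.trans (hu.le_add_mul (x + t • v) w)
  refine ⟨le_antisymm ?_ ?_, fun w hw => ?_, fun w hw => ?_⟩
  · simpa [hdist₀, abs_of_nonneg (hρ.trans hρs)] using hx (x + s • v)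
  · have := hlip (x + s • v)
    rw [hdist, abs_of_nonneg (by linarith)] at this
    linarith
  · rw [mem_ball, add_assoc, ← add_smul] at hw
    have := hlip w
    have htri := dist_triangle (x + t • v) (x + (s + ρ) • v) w
    rw [hdist, abs_of_nonneg (by linarith), dist_comm (x + (s + ρ) • v) w] at htri
    show s < u w
    linarith
  · rw [mem_ball, add_sub_assoc, ← sub_smul] at hw
    have htri := dist_triangle w (x + (s - ρ) • v) x
    rw [hdist₀, abs_of_nonneg (by linarith)] at htri
    show u w < s
    linarith [hx w]

lemma exists_hasTwoSidedBalls_infDist {A : Set E} {s t : ℝ} {x z : E} (hs : 0 < s) (hst : s < t)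
    (hx : x ∈ A) (hz : infDist z A = t) (hxz : ‖x - z‖ = t) :
    ∃ k : ℕ, ∃ v, ‖v‖ = 1 ∧ infDist (x + (s / t) • (z - x)) A = s ∧
      HasTwoSidedBalls (infDist · A) s (1 / (k + 1)) (x + (s / t) • (z - x)) v := by
  have ht : 0 < t := hs.trans hst
  set v := t⁻¹ • (z - x)
  have hv : ‖v‖ = 1 := by
    rw [norm_smul, norm_sub_rev, hxz, Real.norm_eq_abs, abs_of_pos (inv_pos.2 ht),
      inv_mul_cancel₀ ht.ne']
  have hy : x + (s / t) • (z - x) = x + s • v := by rw [smul_smul, div_eq_mul_inv]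
  have hz' : z = x + t • v := by rw [smul_smul, mul_inv_cancel₀ ht.ne', one_smul, add_sub_cancel]
  obtain ⟨k, hk⟩ := exists_nat_one_div_lt (lt_min hs (sub_pos.2 hst))
  rw [hy]
  exact ⟨k, v, hv, hasTwoSidedBalls_of_segment (lipschitz_infDist_pt A) hv
    (fun w => infDist_le_dist_of_mem hx) (by rw [← hz', hz]) (by positivity)
    (hk.le.trans (min_le_left _ _)) (hk.le.trans (min_le_right _ _))⟩

lemma exists_linearIsometry_orthogonal [FiniteDimensional ℝ E] {n : ℕ}
    (hn : Module.finrank ℝ E = n + 1) {e : E} (he : ‖e‖ = 1) :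
    ∃ (L : EuclideanSpace ℝ (Fin n) →ₗᵢ[ℝ] E) (β : E → EuclideanSpace ℝ (Fin n)),
      ∀ y, L (β y) = y - ⟪e, y⟫ • e := by
  have : Fact (Module.finrank ℝ E = n + 1) := ⟨hn⟩
  set K := (ℝ ∙ e)ᗮ
  have hK : Module.finrank ℝ K = n :=
    Submodule.finrank_orthogonal_span_singleton (norm_ne_zero_iff.1 (by rw [he]; exact one_ne_zero))
  let b := (stdOrthonormalBasis ℝ K).reindex (finCongr hK)
  refine ⟨K.subtypeₗᵢ.comp b.repr.symm.toLinearIsometry,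
    fun y => b.repr (K.orthogonalProjectionOnto y), fun y => ?_⟩
  simp [K, Submodule.starProjection_singleton, he]

theorem stmt_12_general (n : ℕ)
    (Ω : Set (EuclideanSpace ℝ (Fin (n + 1))))
    (u : EuclideanSpace ℝ (Fin (n + 1)) → ℝ)
    (hu : ∀ y, u y = Metric.infDist y (frontier Ω))
    (s : ℝ) (hs : 0 < s) :
    ∃ f : ℕ → EuclideanSpace ℝ (Fin n) → EuclideanSpace ℝ (Fin (n + 1)),
      (∀ j, Differentiable ℝ (f j) ∧ ∃ K : NNReal, LipschitzWith K (fderiv ℝ (f j))) ∧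
      {y | ∃ t, s < t ∧ ∃ x z, x ∈ frontier Ω ∧ z ∈ Ω ∧ u z = t ∧ ‖x - z‖ = t ∧
        y = x + (s / t) • (z - x)} ⊆ ⋃ j, Set.range (f j) := by
  obtain rfl : u = (infDist · (frontier Ω)) := funext hu
  have : Nonempty (sphere (0 : EuclideanSpace ℝ (Fin (n + 1))) 1) :=
    (NormedSpace.sphere_nonempty.2 zero_le_one).to_subtype
  set e := TopologicalSpace.denseSeq (sphere (0 : EuclideanSpace ℝ (Fin (n + 1))) 1)
  set q := TopologicalSpace.denseSeq (EuclideanSpace ℝ (Fin (n + 1)))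
  choose L β hLβ using fun i =>
    exists_linearIsometry_orthogonal finrank_euclideanSpace_fin (norm_eq_of_mem_sphere (e i))
  choose G hG hcover using fun a : ℕ × ℕ × ℕ =>
    exists_isC11_cover_levelSet (norm_eq_of_mem_sphere (e a.1)) (hLβ a.1) (infDist · (frontier Ω))
      s (Nat.one_div_pos_of_nat (n := a.2.2)) (q a.2.1)
  refine ⟨fun j => G (Denumerable.ofNat _ j), fun j => hG _, ?_⟩
  rintro _ ⟨t, hst, x, z, hx, -, hzt, hxz, rfl⟩
  obtain ⟨k, v, hv, hlevel, hballs⟩ := exists_hasTwoSidedBalls_infDist hs hst hx hzt hxz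
  obtain ⟨i, hi⟩ := (TopologicalSpace.denseRange_denseSeq _).exists_dist_lt
    (⟨v, mem_sphere_zero_iff_norm.2 hv⟩ : sphere (0 : EuclideanSpace ℝ (Fin (n + 1))) 1)
    (by norm_num : (0 : ℝ) < 1 / 4)
  obtain ⟨l, hl⟩ := (TopologicalSpace.denseRange_denseSeq _).exists_dist_lt
    (x + (s / t) • (z - x)) (by positivity : (0 : ℝ) < 1 / (k + 1) / 4)
  refine mem_iUnion.2 ⟨Encodable.encode (i, l, k), ?_⟩
  simp only [Denumerable.ofNat_encode]
  exact hcover _ _ v (mem_ball.2 hl) hlevel hv (by rw [← dist_eq_norm]; exact hi.le) hballs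

/-- `Γ_s^+ = ⋃_{t>s} Γ_s^t` can be covered by countably many `C^{1,1}`-images of
`ℝⁿ` in `ℝ^{n+1}`: there are maps `f_j : ℝⁿ → ℝ^{n+1}`, differentiable with
Lipschitz derivative, whose ranges cover `Γ_s^+`. -/
theorem stmt_12 (n : ℕ) (hn : 1 ≤ n)
    (Ω : Set (EuclideanSpace ℝ (Fin (n + 1))))
    (hΩopen : IsOpen Ω) (hΩne : Ω.Nonempty) (hfr : (frontier Ω).Nonempty)
    (u : EuclideanSpace ℝ (Fin (n + 1)) → ℝ)
    (hu : ∀ y, u y = Metric.infDist y (frontier Ω))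
    (s : ℝ) (hs : 0 < s) :
    ∃ f : ℕ → EuclideanSpace ℝ (Fin n) → EuclideanSpace ℝ (Fin (n + 1)),
      (∀ j, Differentiable ℝ (f j) ∧ ∃ K : NNReal, LipschitzWith K (fderiv ℝ (f j))) ∧
      {y | ∃ t, s < t ∧ ∃ x z, x ∈ frontier Ω ∧ z ∈ Ω ∧ u z = t ∧ ‖x - z‖ = t ∧
        y = x + (s / t) • (z - x)} ⊆ ⋃ j, Set.range (f j) :=
  stmt_12_general n Ω u hu s hs
end

section
/- Let Ω be a nonempty open subset of ℝ^{n+1} (n ≥ 1) with nonempty topological boundary ∂Ω, let u(y) = dist(y, ∂Ω), and let 0 < s < t. Then the n-dimensional Hausdorff measures satisfy ℋⁿ(∂Ω_t) ≤ (t/s)ⁿ · ℋⁿ(Γ_s^t), where ∂Ω_t = {y ∈ Ω : u(y) = t}. -/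
open RealInnerProductSpace Metric Set MeasureTheory

lemma expand_lemma {E : Type*} [NormedAddCommGroup E] [InnerProductSpace ℝ E]
    (a v1 v2 : E) (l : ℝ) (hl : 1 ≤ l)
    (h1 : l * ‖v1‖ ≤ ‖a + l • v1‖) (h2 : l * ‖v2‖ ≤ ‖a - l • v2‖) :
    ‖a + l • (v1 - v2)‖ ≤ l * ‖a + (v1 - v2)‖ := by
  have l0 : (0:ℝ) < l := lt_of_lt_of_le one_pos hl
  have h1' : 0 ≤ ‖a‖^2 + 2 * l * ⟪a, v1⟫ := by
    have := sq_le_sq' (by nlinarith [norm_nonneg (a + l • v1), mul_nonneg l0.le (norm_nonneg v1)] : -(‖a + l • v1‖) ≤ l * ‖v1‖) h1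
    rw [norm_add_sq_real] at this
    simp only [inner_smul_right, norm_smul, Real.norm_eq_abs, abs_of_pos l0, mul_pow] at this
    nlinarith
  have h2' : 0 ≤ ‖a‖^2 - 2 * l * ⟪a, v2⟫ := by
    have := sq_le_sq' (by nlinarith [norm_nonneg (a - l • v2), mul_nonneg l0.le (norm_nonneg v2)] : -(‖a - l • v2‖) ≤ l * ‖v2‖) h2
    rw [norm_sub_sq_real] at this
    simp only [inner_smul_right, norm_smul, Real.norm_eq_abs, abs_of_pos l0, mul_pow] at this
    nlinarith
  have key : ‖a + l • (v1 - v2)‖^2 ≤ (l * ‖a + (v1 - v2)‖)^2 := by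
    rw [norm_add_sq_real, mul_pow, norm_add_sq_real]
    simp only [inner_smul_right, norm_smul, Real.norm_eq_abs, abs_of_pos l0, mul_pow,
      inner_sub_right]
    nlinarith [norm_nonneg a, sq_nonneg (l - 1), sq_nonneg ‖a‖]
  have h := Real.sqrt_le_sqrt key
  rwa [Real.sqrt_sq (norm_nonneg _), Real.sqrt_sq (by positivity)] at h

lemma config_expand {E : Type*} [NormedAddCommGroup E] [InnerProductSpace ℝ E]
    (x1 x2 z1 z2 : E) (s t : ℝ) (hs : 0 < s) (hst : s < t)
    (h1 : ‖x1 - z1‖ = t) (h2 : ‖x2 - z2‖ = t)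
    (h12 : t ≤ ‖z1 - x2‖) (h21 : t ≤ ‖z2 - x1‖) :
    ‖z1 - z2‖ ≤ (t / s) * ‖(x1 + (s / t) • (z1 - x1)) - (x2 + (s / t) • (z2 - x2))‖ := by
  have ht : (0:ℝ) < t := hs.trans hst
  set v1 : E := (s / t) • (z1 - x1) with hv1
  set v2 : E := (s / t) • (z2 - x2) with hv2
  have hl : 1 ≤ t / s := (one_le_div hs).2 hst.le
  have hmul : (t / s) * (s / t) = 1 := by field_simp
  have hmul2 : (t / s) * s = t := by field_simp
  have hlv1 : (t / s) • v1 = z1 - x1 := by rw [hv1, smul_smul, hmul, one_smul]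
  have hlv2 : (t / s) • v2 = z2 - x2 := by rw [hv2, smul_smul, hmul, one_smul]
  have hnv1 : ‖v1‖ = s := by
    rw [hv1, norm_smul, Real.norm_eq_abs, abs_of_pos (by positivity), norm_sub_rev, h1]
    field_simp
  have hnv2 : ‖v2‖ = s := by
    rw [hv2, norm_smul, Real.norm_eq_abs, abs_of_pos (by positivity), norm_sub_rev, h2]
    field_simp
  have key := expand_lemma (x1 - x2) v1 v2 (t / s) hl ?_ ?_
  · have e1 : x1 - x2 + (t / s) • (v1 - v2) = z1 - z2 := by
      rw [smul_sub, hlv1, hlv2]; abel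
    have e2 : x1 - x2 + (v1 - v2) = (x1 + v1) - (x2 + v2) := by abel
    rwa [e1, e2] at key
  · rw [hlv1, hnv1, hmul2]
    have e : x1 - x2 + (z1 - x1) = z1 - x2 := by abel
    rw [e]; exact h12
  · rw [hlv2, hnv2, hmul2]
    have e : x1 - x2 - (z2 - x2) = x1 - z2 := by abel
    rw [e, norm_sub_rev]; exact h21

/-- Estimate (3.24): `ℋⁿ(∂Ω_t) ≤ (t/s)ⁿ ℋⁿ(Γ_s^t)` for `0 < s < t`. -/
theorem stmt_13 (n : ℕ) (hn : 1 ≤ n)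
    (Ω : Set (EuclideanSpace ℝ (Fin (n + 1))))
    (hΩopen : IsOpen Ω) (hΩne : Ω.Nonempty) (hfr : (frontier Ω).Nonempty)
    (u : EuclideanSpace ℝ (Fin (n + 1)) → ℝ)
    (hu : ∀ y, u y = Metric.infDist y (frontier Ω))
    (s t : ℝ) (hs : 0 < s) (hst : s < t) :
    μH[(n : ℝ)] {y | y ∈ Ω ∧ u y = t} ≤
      ENNReal.ofReal ((t / s) ^ n) *
        μH[(n : ℝ)] {y | ∃ x z, x ∈ frontier Ω ∧ z ∈ Ω ∧ u z = t ∧ ‖x - z‖ = t ∧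
          y = x + (s / t) • (z - x)} := by
  classical
  have ht : (0:ℝ) < t := hs.trans hst
  set P : EuclideanSpace ℝ (Fin (n + 1)) → EuclideanSpace ℝ (Fin (n + 1)) → Prop :=
    fun y z => ∃ x, x ∈ frontier Ω ∧ z ∈ Ω ∧ u z = t ∧ ‖x - z‖ = t ∧
      y = x + (s / t) • (z - x) with hP
  set Γ : Set (EuclideanSpace ℝ (Fin (n + 1))) := {y | ∃ z, P y z} with hΓ
  have hΓeq : {y | ∃ x z, x ∈ frontier Ω ∧ z ∈ Ω ∧ u z = t ∧ ‖x - z‖ = t ∧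
      y = x + (s / t) • (z - x)} = Γ := by
    ext y; constructor
    · rintro ⟨x, z, h⟩; exact ⟨z, x, h⟩
    · rintro ⟨z, x, h⟩; exact ⟨x, z, h⟩
  have hkey : ∀ y1 y2 z1 z2, P y1 z1 → P y2 z2 → ‖z1 - z2‖ ≤ (t / s) * ‖y1 - y2‖ := by
    rintro y1 y2 z1 z2 ⟨x1, hx1F, hz1Ω, huz1, hn1, rfl⟩ ⟨x2, hx2F, hz2Ω, huz2, hn2, rfl⟩
    have h12 : t ≤ ‖z1 - x2‖ := by
      have h := Metric.infDist_le_dist_of_mem (x := z1) hx2F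
      rw [← hu z1, huz1, dist_eq_norm] at h; exact h
    have h21 : t ≤ ‖z2 - x1‖ := by
      have h := Metric.infDist_le_dist_of_mem (x := z2) hx1F
      rw [← hu z2, huz2, dist_eq_norm] at h; exact h
    exact config_expand x1 x2 z1 z2 s t hs hst hn1 hn2 h12 h21
  set f : EuclideanSpace ℝ (Fin (n + 1)) → EuclideanSpace ℝ (Fin (n + 1)) :=
    fun y => if h : ∃ z, P y z then h.choose else 0 with hf
  have hfP : ∀ y z, P y z → f y = z := by
    intro y z hz
    have hex : ∃ z, P y z := ⟨z, hz⟩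
    have hspec : P y hex.choose := hex.choose_spec
    have h0 := hkey y y hex.choose z hspec hz
    simp only [sub_self, norm_zero, mul_zero] at h0
    have hzz : hex.choose = z := by
      have := le_antisymm h0 (norm_nonneg _)
      rwa [norm_eq_zero, sub_eq_zero] at this
    simp [hf, dif_pos hex, hzz]
  have hlip : LipschitzOnWith (Real.toNNReal (t / s)) f Γ := by
    apply LipschitzOnWith.of_dist_le_mul
    rintro y1 ⟨z1, hz1⟩ y2 ⟨z2, hz2⟩
    rw [hfP y1 z1 hz1, hfP y2 z2 hz2, dist_eq_norm, dist_eq_norm,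
      Real.coe_toNNReal _ (by positivity)]
    exact hkey y1 y2 z1 z2 hz1 hz2
  have hsub : {y | y ∈ Ω ∧ u y = t} ⊆ f '' Γ := by
    rintro z ⟨hzΩ, hzt⟩
    obtain ⟨x, hxF, hxd⟩ := isClosed_frontier.exists_infDist_eq_dist hfr z
    have hdist : ‖x - z‖ = t := by
      rw [norm_sub_rev, ← dist_eq_norm, ← hxd, ← hu z, hzt]
    refine ⟨x + (s / t) • (z - x), ⟨z, x, hxF, hzΩ, hzt, hdist, rfl⟩, ?_⟩
    exact hfP _ z ⟨x, hxF, hzΩ, hzt, hdist, rfl⟩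
  calc μH[(n : ℝ)] {y | y ∈ Ω ∧ u y = t}
      ≤ μH[(n : ℝ)] (f '' Γ) := measure_mono hsub
    _ ≤ (Real.toNNReal (t / s) : ENNReal) ^ (n : ℝ) * μH[(n : ℝ)] Γ :=
        hlip.hausdorffMeasure_image_le (Nat.cast_nonneg n)
    _ = ENNReal.ofReal ((t / s) ^ n) * μH[(n : ℝ)] Γ := by
        rw [ENNReal.rpow_natCast, ENNReal.ofReal_pow (by positivity : (0:ℝ) ≤ t / s)]
        rfl
    _ = _ := by rw [hΓeq]
end

section
/- Let Ω be a nonempty open subset of ℝ^{n+1} (n ≥ 1) with nonempty topological boundary ∂Ω and with finite Lebesgue measure, and let u(y) = dist(y, ∂Ω). Then Lebesgue-almost every point of Ω lies on the relative interior of a maximal minimizing segment: for a.e. y ∈ Ω there exist t > u(y), x ∈ ∂Ω and z ∈ Ω with u(z) = t, ‖x − z‖ = t, and y = x + (u(y)/t)(z − x). Equivalently, |Ω \ Ω*| = 0, where Ω* = ⋃_{s>0} Γ_s^+. -/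
/-!
Let `p y` be a nearest boundary point of `y` and `0 < c < 1`. The map `y ↦ p y + c (y - p y)`
sends every point of `Ω` into `Ω*`, and it shrinks distances by at most the factor `c`, because
the nearest-point map is monotone: `⟪z₁ - z₂, p z₁ - p z₂⟫ ≥ 0`. So if `A = Ω \ Ω*`, the image
of `A ∩ B(y, ρ)` is a set of measure at least `c ^ d |A ∩ B(y, ρ)|` inside
`B(y, ρ + (1 - c)(u(y) + ρ)) \ A`. With `c = 1 - ρ²` the enlarged ball has radius `ρ (1 + o(1))`,
so at a Lebesgue density point `y` of `A` this gives `2 ≤ 1` as `ρ → 0`.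

Measurability of `Ω ∩ Ω*` comes from writing it as a countable union, over rational `q`, of the
injective continuous images `(x, z) ↦ x + q (z - x)` of the Borel set of pairs `(x, z)` with `x` a
nearest boundary point of `z` (Lusin–Souslin).
-/

open RealInnerProductSpace Metric Set MeasureTheory Filter Module
open scoped Topology ENNReal

section InnerProduct

variable {E : Type*} [NormedAddCommGroup E] [InnerProductSpace ℝ E]

theorem inner_sub_sub_nonneg_of_dist_le {x₁ z₁ x₂ z₂ : E}
    (h₁ : dist z₁ x₁ ≤ dist z₁ x₂) (h₂ : dist z₂ x₂ ≤ dist z₂ x₁) :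
    0 ≤ ⟪z₁ - z₂, x₁ - x₂⟫ := by
  rw [dist_eq_norm, dist_eq_norm, ← sq_le_sq₀ (norm_nonneg _) (norm_nonneg _),
    ← real_inner_self_eq_norm_sq, ← real_inner_self_eq_norm_sq] at h₁ h₂
  simp only [inner_sub_left, inner_sub_right, real_inner_comm] at h₁ h₂ ⊢
  linarith

theorem mul_norm_le_norm_smul_add_one_sub_smul {a b : E} (hab : 0 ≤ ⟪a, b⟫) {q : ℝ}
    (hq0 : 0 ≤ q) (hq1 : q ≤ 1) : q * ‖a‖ ≤ ‖q • a + (1 - q) • b‖ := by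
  refine le_of_sq_le_sq ?_ (norm_nonneg _)
  rw [norm_add_sq_real, norm_smul, norm_smul, real_inner_smul_left, real_inner_smul_right,
    Real.norm_of_nonneg hq0, Real.norm_of_nonneg (sub_nonneg.2 hq1)]
  nlinarith [mul_nonneg (mul_nonneg hq0 (sub_nonneg.2 hq1)) hab]

theorem mul_dist_le_dist_add_smul_sub {x₁ z₁ x₂ z₂ : E} (h₁ : dist z₁ x₁ ≤ dist z₁ x₂)
    (h₂ : dist z₂ x₂ ≤ dist z₂ x₁) {q : ℝ} (hq0 : 0 ≤ q) (hq1 : q ≤ 1) :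
    q * dist z₁ z₂ ≤ dist (x₁ + q • (z₁ - x₁)) (x₂ + q • (z₂ - x₂)) := by
  have h : x₁ + q • (z₁ - x₁) - (x₂ + q • (z₂ - x₂)) = q • (z₁ - z₂) + (1 - q) • (x₁ - x₂) := by
    module
  rw [dist_eq_norm, dist_eq_norm, h]
  exact mul_norm_le_norm_smul_add_one_sub_smul (inner_sub_sub_nonneg_of_dist_le h₁ h₂) hq0 hq1

end InnerProduct

section NearestBoundaryPairs

variable {X : Type*} [MetricSpace X]

def nearestBoundaryPairs (Ω : Set X) : Set (X × X) :=
  {p | p.1 ∈ frontier Ω ∧ p.2 ∈ Ω ∧ infDist p.2 (frontier Ω) = dist p.1 p.2}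

theorem dist_pos_of_mem_nearestBoundaryPairs {Ω : Set X} (hΩ : IsOpen Ω) {p : X × X}
    (hp : p ∈ nearestBoundaryPairs Ω) : 0 < dist p.1 p.2 :=
  dist_pos.2 fun h => hΩ.inter_frontier_eq.subset ⟨hp.2.1, h ▸ hp.1⟩

end NearestBoundaryPairs

section Segment

variable {E : Type*} [NormedAddCommGroup E] [NormedSpace ℝ E]

theorem infDist_add_smul_sub {s : Set E} {x z : E} (hx : x ∈ s) (hz : infDist z s = dist x z)
    {q : ℝ} (hq0 : 0 ≤ q) (hq1 : q ≤ 1) :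
    infDist (x + q • (z - x)) s = q * dist x z := by
  have hy : dist (x + q • (z - x)) x = q * dist x z := by
    rw [dist_eq_norm, add_sub_cancel_left, norm_smul, Real.norm_of_nonneg hq0, ← dist_eq_norm,
      dist_comm]
  have hz' : dist z (x + q • (z - x)) = (1 - q) * dist x z := by
    rw [dist_eq_norm, show z - (x + q • (z - x)) = (1 - q) • (z - x) by module, norm_smul,
      Real.norm_of_nonneg (sub_nonneg.2 hq1), ← dist_eq_norm, dist_comm]
  refine le_antisymm (hy ▸ infDist_le_dist_of_mem hx) ?_
  have := infDist_le_infDist_add_dist (s := s) (x := z) (y := x + q • (z - x))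
  rw [hz, hz'] at this
  linarith

theorem ball_infDist_frontier_subset_s15 {s : Set E} (hs : IsOpen s) {z : E} (hz : z ∈ s) :
    ball z (infDist z (frontier s)) ⊆ s := by
  rcases le_or_gt (infDist z (frontier s)) 0 with h | h
  · simp [ball_eq_empty.2 h]
  refine (convex_ball z _).isPreconnected.subset_of_closure_inter_subset hs
    ⟨z, mem_ball_self h, hz⟩ fun w ⟨hwc, hwb⟩ => ?_
  by_contra hws
  have hwf : w ∈ frontier s := by rw [hs.frontier_eq]; exact ⟨hwc, hws⟩
  exact (mem_ball'.1 hwb).not_ge (infDist_le_dist_of_mem hwf)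

/-- Its trace on `Ω` is the set `Ω*` of the paper. -/
def segmentInteriorSet (Ω : Set E) : Set E :=
  {y | ∃ t, infDist y (frontier Ω) < t ∧ ∃ x z, x ∈ frontier Ω ∧ z ∈ Ω ∧
    infDist z (frontier Ω) = t ∧ ‖x - z‖ = t ∧ y = x + (infDist y (frontier Ω) / t) • (z - x)}

variable {Ω : Set E}

theorem mk_add_smul_sub_mem_nearestBoundaryPairs (hΩ : IsOpen Ω) {p : E × E}
    (hp : p ∈ nearestBoundaryPairs Ω) {q : ℝ} (hq0 : 0 < q) (hq1 : q ≤ 1) :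
    (p.1, p.1 + q • (p.2 - p.1)) ∈ nearestBoundaryPairs Ω := by
  obtain ⟨hx, hz, hd⟩ := hp
  have hpos := dist_pos_of_mem_nearestBoundaryPairs hΩ ⟨hx, hz, hd⟩
  have hdist : infDist (p.1 + q • (p.2 - p.1)) (frontier Ω) = q * dist p.1 p.2 :=
    infDist_add_smul_sub hx hd hq0.le hq1
  refine ⟨hx, ball_infDist_frontier_subset_s15 hΩ hz ?_, ?_⟩
  · rw [mem_ball, hd, dist_eq_norm,
      show p.1 + q • (p.2 - p.1) - p.2 = (1 - q) • (p.1 - p.2) by module, norm_smul,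
      Real.norm_of_nonneg (sub_nonneg.2 hq1), ← dist_eq_norm]
    nlinarith
  · show _ = dist p.1 (p.1 + q • (p.2 - p.1))
    rw [hdist, dist_self_add_right, norm_smul, Real.norm_of_nonneg hq0.le, dist_eq_norm']

theorem add_smul_sub_mem_segmentInteriorSet (hΩ : IsOpen Ω) {p : E × E}
    (hp : p ∈ nearestBoundaryPairs Ω) {q : ℝ} (hq0 : 0 < q) (hq1 : q < 1) :
    p.1 + q • (p.2 - p.1) ∈ segmentInteriorSet Ω := by
  have hpos := dist_pos_of_mem_nearestBoundaryPairs hΩ hp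
  have hdist : infDist (p.1 + q • (p.2 - p.1)) (frontier Ω) = q * dist p.1 p.2 :=
    infDist_add_smul_sub hp.1 hp.2.2 hq0.le hq1.le
  refine ⟨dist p.1 p.2, ?_, p.1, p.2, hp.1, hp.2.1, hp.2.2, (dist_eq_norm _ _).symm, ?_⟩
  · rw [hdist]; nlinarith
  · rw [hdist, mul_div_cancel_right₀ _ hpos.ne']

end Segment

section Measurability

variable {E : Type*} [NormedAddCommGroup E] [InnerProductSpace ℝ E] {Ω : Set E}

theorem injOn_add_smul_sub_nearestBoundaryPairs {q : ℝ} (hq0 : 0 < q) (hq1 : q < 1) :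
    InjOn (fun p : E × E => p.1 + q • (p.2 - p.1)) (nearestBoundaryPairs Ω) := by
  rintro ⟨x₁, z₁⟩ ⟨hx₁, -, hd₁⟩ ⟨x₂, z₂⟩ ⟨hx₂, -, hd₂⟩ heq
  have h₁ : dist z₁ x₁ ≤ dist z₁ x₂ := by
    rw [dist_comm z₁ x₁, ← hd₁]; exact infDist_le_dist_of_mem hx₂
  have h₂ : dist z₂ x₂ ≤ dist z₂ x₁ := by
    rw [dist_comm z₂ x₂, ← hd₂]; exact infDist_le_dist_of_mem hx₁
  have hexp := mul_dist_le_dist_add_smul_sub h₁ h₂ hq0.le hq1.le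
  simp only at heq
  rw [heq, dist_self] at hexp
  have hz : z₁ = z₂ := dist_le_zero.1 (nonpos_of_mul_nonpos_right hexp hq0)
  subst hz
  have hx : (1 - q) • (x₁ - x₂) = 0 := by
    rw [← sub_eq_zero.2 heq]; module
  rw [smul_eq_zero, sub_eq_zero, sub_eq_zero] at hx
  rw [hx.resolve_left hq1.ne']

theorem inter_segmentInteriorSet_eq_iUnion (hΩ : IsOpen Ω) :
    Ω ∩ segmentInteriorSet Ω = ⋃ (q : ℚ) (_ : (q : ℝ) ∈ Ioo 0 1),
      (fun p : E × E => p.1 + (q : ℝ) • (p.2 - p.1)) '' nearestBoundaryPairs Ω := by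
  ext y
  simp only [mem_inter_iff, mem_iUnion, mem_image, exists_prop]
  constructor
  · rintro ⟨hy, t, hyt, x, z, hx, hz, hzt, hxz, hyxz⟩
    have hpair : (x, z) ∈ nearestBoundaryPairs Ω := ⟨hx, hz, by rw [hzt, ← hxz, dist_eq_norm]⟩
    have hy0 : 0 < infDist y (frontier Ω) :=
      (isClosed_frontier.notMem_iff_infDist_pos ⟨x, hx⟩).1 fun h =>
        hΩ.inter_frontier_eq.subset ⟨hy, h⟩
    set r := infDist y (frontier Ω) / t
    have hr0 : 0 < r := div_pos hy0 (hy0.trans hyt)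
    have hr1 : r < 1 := (div_lt_one (hy0.trans hyt)).2 hyt
    obtain ⟨q, hrq, hq1⟩ := exists_rat_btwn hr1
    have hq0 : (0 : ℝ) < q := hr0.trans hrq
    refine ⟨q, ⟨hq0, hq1⟩, _, mk_add_smul_sub_mem_nearestBoundaryPairs hΩ hpair
      (div_pos hr0 hq0) ((div_le_one hq0).2 hrq.le), ?_⟩
    rw [hyxz]
    dsimp only
    rw [add_sub_cancel_left, smul_smul, mul_div_cancel₀ _ hq0.ne']
  · rintro ⟨q, hq, p, hp, rfl⟩
    exact ⟨(mk_add_smul_sub_mem_nearestBoundaryPairs hΩ hp hq.1 hq.2.le).2.1,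
      add_smul_sub_mem_segmentInteriorSet hΩ hp hq.1 hq.2⟩

theorem measurableSet_inter_segmentInteriorSet [FiniteDimensional ℝ E] [MeasurableSpace E]
    [BorelSpace E] (hΩ : IsOpen Ω) : MeasurableSet (Ω ∩ segmentInteriorSet Ω) := by
  have hpairs : MeasurableSet (nearestBoundaryPairs Ω) :=
    (measurable_fst isClosed_frontier.measurableSet).inter <|
      (measurable_snd hΩ.measurableSet).inter <| measurableSet_eq_fun
        ((continuous_infDist_pt _).comp continuous_snd).measurable continuous_dist.measurable
  rw [inter_segmentInteriorSet_eq_iUnion hΩ]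
  exact .iUnion fun q => .iUnion fun hq => hpairs.image_of_continuousOn_injOn
    (by fun_prop) (injOn_add_smul_sub_nearestBoundaryPairs hq.1 hq.2)

end Measurability

section Measure

variable {E : Type*} [NormedAddCommGroup E] [NormedSpace ℝ E] [FiniteDimensional ℝ E]
  [MeasurableSpace E] [BorelSpace E] (μ : Measure E) [μ.IsAddHaarMeasure]

theorem ofReal_pow_finrank_mul_le_addHaar_image {f : E → E} {c : ℝ} (hc : 0 < c)
    (hf : ∀ a b, c * dist a b ≤ dist (f a) (f b)) (s : Set E) :
    ENNReal.ofReal c ^ finrank ℝ E * μ s ≤ μ (f '' s) := by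
  have hf' : AntilipschitzWith (Real.toNNReal c⁻¹) f := .of_le_mul_dist fun a b => by
    rw [Real.coe_toNNReal _ (inv_nonneg.2 hc.le), ← div_eq_inv_mul, le_div_iff₀' hc]
    exact hf a b
  have hH := hf'.le_hausdorffMeasure_image (Nat.cast_nonneg (finrank ℝ E)) s
  rw [ENNReal.rpow_natCast] at hH
  have hK : ENNReal.ofReal c * (Real.toNNReal c⁻¹ : ℝ≥0∞) = 1 := by
    rw [← ENNReal.ofReal.eq_def, ← ENNReal.ofReal_mul hc.le, mul_inv_cancel₀ hc.ne',
      ENNReal.ofReal_one]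
  rw [μ.isAddLeftInvariant_eq_smul μH[finrank ℝ E]]
  simp only [Measure.smul_apply, ENNReal.smul_def, smul_eq_mul]
  set k : ℝ≥0∞ := (μ.addHaarScalarFactor μH[finrank ℝ E] : ℝ≥0∞)
  calc ENNReal.ofReal c ^ finrank ℝ E * (k * μH[finrank ℝ E] s)
      ≤ ENNReal.ofReal c ^ finrank ℝ E *
        (k * ((Real.toNNReal c⁻¹ : ℝ≥0∞) ^ finrank ℝ E * μH[finrank ℝ E] (f '' s))) := by
        gcongr
    _ = k * ((ENNReal.ofReal c * (Real.toNNReal c⁻¹ : ℝ≥0∞)) ^ finrank ℝ E *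
        μH[finrank ℝ E] (f '' s)) := by ring
    _ = k * μH[finrank ℝ E] (f '' s) := by rw [hK, one_pow, one_mul]

end Measure

theorem exists_mem_tendsto_measure_inter_div {β : Type*} [MetricSpace β] [MeasurableSpace β]
    [BorelSpace β] [SecondCountableTopology β] [HasBesicovitchCovering β] (μ : Measure β)
    [IsLocallyFiniteMeasure μ] {s : Set β} (hs : μ s ≠ 0) :
    ∃ y ∈ s, Tendsto (fun r => μ (s ∩ closedBall y r) / μ (closedBall y r)) (𝓝[>] 0) (𝓝 1) := by
  by_contra! h
  exact hs (Measure.restrict_apply_self μ s ▸ measure_mono_null h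
    (ae_iff.1 (Besicovitch.ae_tendsto_measure_inter_div μ s)))

section Main

variable {E : Type*} [NormedAddCommGroup E] [InnerProductSpace ℝ E] [FiniteDimensional ℝ E]
  [MeasurableSpace E] [BorelSpace E] (μ : Measure E) [μ.IsAddHaarMeasure] {Ω : Set E}

theorem one_add_pow_mul_measure_inter_closedBall_le (hΩ : IsOpen Ω)
    (hfr : (frontier Ω).Nonempty) {A : Set E} (hAm : NullMeasurableSet A μ)
    (hA : A ⊆ Ω \ segmentInteriorSet Ω) (y : E) {ρ c : ℝ} (hρ : 0 ≤ ρ) (hc0 : 0 < c)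
    (hc1 : c < 1) :
    (1 + ENNReal.ofReal c ^ finrank ℝ E) * μ (A ∩ closedBall y ρ) ≤
      μ (closedBall y (ρ + (1 - c) * (infDist y (frontier Ω) + ρ))) := by
  choose p hpΩ hp using isClosed_frontier.exists_infDist_eq_dist hfr
  set f : E → E := fun a => p a + c • (a - p a)
  have hexp : ∀ a b, c * dist a b ≤ dist (f a) (f b) := fun a b =>
    mul_dist_le_dist_add_smul_sub ((hp a).symm.trans_le (infDist_le_dist_of_mem (hpΩ b)))
      ((hp b).symm.trans_le (infDist_le_dist_of_mem (hpΩ a))) hc0.le hc1.le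
  set R := ρ + (1 - c) * (infDist y (frontier Ω) + ρ)
  have hρR : ρ ≤ R := le_add_of_nonneg_right <|
    mul_nonneg (sub_nonneg.2 hc1.le) (add_nonneg infDist_nonneg hρ)
  have hmaps : MapsTo f (A ∩ closedBall y ρ) (closedBall y R \ A) := by
    rintro a ⟨haA, hay⟩
    have hpair : (p a, a) ∈ nearestBoundaryPairs Ω :=
      ⟨hpΩ a, (hA haA).1, by rw [hp a, dist_comm]⟩
    refine ⟨?_, fun h => (hA h).2 (add_smul_sub_mem_segmentInteriorSet hΩ hpair hc0 hc1)⟩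
    have hfa : dist (f a) a = (1 - c) * infDist a (frontier Ω) := by
      rw [hp a, dist_eq_norm, show f a - a = (1 - c) • (p a - a) by simp only [f]; module,
        norm_smul, Real.norm_of_nonneg (sub_nonneg.2 hc1.le), dist_eq_norm']
    rw [mem_closedBall] at hay ⊢
    calc dist (f a) y ≤ dist (f a) a + dist a y := dist_triangle _ _ _
      _ ≤ (1 - c) * (infDist y (frontier Ω) + ρ) + ρ := by
        have hua : infDist a (frontier Ω) ≤ infDist y (frontier Ω) + ρ :=
          infDist_le_infDist_add_dist.trans (by gcongr)
        rw [hfa]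
        exact add_le_add (mul_le_mul_of_nonneg_left hua (sub_nonneg.2 hc1.le)) hay
      _ = R := add_comm _ _
  calc (1 + ENNReal.ofReal c ^ finrank ℝ E) * μ (A ∩ closedBall y ρ)
      = μ (A ∩ closedBall y ρ) + ENNReal.ofReal c ^ finrank ℝ E * μ (A ∩ closedBall y ρ) := by
        ring
    _ ≤ μ (closedBall y R ∩ A) + μ (closedBall y R \ A) := by
        exact add_le_add (measure_mono fun x hx => ⟨closedBall_subset_closedBall hρR hx.2, hx.1⟩)
          ((ofReal_pow_finrank_mul_le_addHaar_image μ hc0 hexp _).trans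
            (measure_mono hmaps.image_subset))
    _ = μ (closedBall y R) := measure_inter_add_sdiff₀ _ hAm

theorem addHaar_diff_segmentInteriorSet_eq_zero (hΩ : IsOpen Ω) (hfr : (frontier Ω).Nonempty) :
    μ (Ω \ segmentInteriorSet Ω) = 0 := by
  set A := Ω \ segmentInteriorSet Ω
  have hAm : MeasurableSet A := by
    simpa only [sdiff_self_inter] using
      hΩ.measurableSet.diff (measurableSet_inter_segmentInteriorSet hΩ)
  by_contra hA0
  obtain ⟨y, -, hy⟩ := exists_mem_tendsto_measure_inter_div μ hA0
  set s := infDist y (frontier Ω)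
  have hle : ∀ᶠ ρ in 𝓝[>] 0,
      (1 + ENNReal.ofReal (1 - ρ ^ 2) ^ finrank ℝ E) *
          (μ (A ∩ closedBall y ρ) / μ (closedBall y ρ)) ≤
        ENNReal.ofReal ((1 + ρ * (s + ρ)) ^ finrank ℝ E) := by
    filter_upwards [Ioo_mem_nhdsGT one_pos] with ρ ⟨hρ0, hρ1⟩
    have key := one_add_pow_mul_measure_inter_closedBall_le μ hΩ hfr hAm.nullMeasurableSet
      subset_rfl y hρ0.le (c := 1 - ρ ^ 2) (by nlinarith) (by nlinarith)
    rw [show ρ + (1 - (1 - ρ ^ 2)) * (s + ρ) = (1 + ρ * (s + ρ)) * ρ by ring,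
      Measure.addHaar_closedBall_mul μ y
        (add_nonneg zero_le_one (mul_nonneg hρ0.le (add_nonneg infDist_nonneg hρ0.le))) hρ0.le,
      ← Measure.addHaar_closedBall_center μ y] at key
    rw [← mul_div_assoc]
    exact ENNReal.div_le_of_le_mul key
  have hlim_left : Tendsto (fun ρ => (1 + ENNReal.ofReal (1 - ρ ^ 2) ^ finrank ℝ E) *
      (μ (A ∩ closedBall y ρ) / μ (closedBall y ρ))) (𝓝[>] 0) (𝓝 2) := by
    have hc : Continuous fun ρ : ℝ => 1 + ENNReal.ofReal (1 - ρ ^ 2) ^ finrank ℝ E :=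
      continuous_const.add <|
        (ENNReal.continuous_pow _).comp (ENNReal.continuous_ofReal.comp (by fun_prop))
    have h := ENNReal.Tendsto.mul ((hc.tendsto 0).mono_left nhdsWithin_le_nhds)
      (Or.inl (by simp)) hy (Or.inl one_ne_zero)
    simpa [one_add_one_eq_two] using h
  have hlim_right : Tendsto (fun ρ => ENNReal.ofReal ((1 + ρ * (s + ρ)) ^ finrank ℝ E))
      (𝓝[>] 0) (𝓝 1) := by
    have hc : Continuous fun ρ : ℝ => ENNReal.ofReal ((1 + ρ * (s + ρ)) ^ finrank ℝ E) :=
      ENNReal.continuous_ofReal.comp (by fun_prop)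
    simpa using (hc.tendsto 0).mono_left nhdsWithin_le_nhds
  have := le_of_tendsto_of_tendsto hlim_left hlim_right hle
  norm_num at this

end Main

theorem stmt_15_general (n : ℕ)
    (Ω : Set (EuclideanSpace ℝ (Fin (n + 1))))
    (hΩopen : IsOpen Ω) (hfr : (frontier Ω).Nonempty)
    (u : EuclideanSpace ℝ (Fin (n + 1)) → ℝ)
    (hu : ∀ y, u y = Metric.infDist y (frontier Ω)) :
    volume (Ω \ {y | ∃ t, u y < t ∧ ∃ x z, x ∈ frontier Ω ∧ z ∈ Ω ∧ u z = t ∧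
      ‖x - z‖ = t ∧ y = x + (u y / t) • (z - x)}) = 0 := by
  simp only [hu]
  exact addHaar_diff_segmentInteriorSet_eq_zero volume hΩopen hfr

/-- Claim (3.23): `|Ω \ Ω*| = 0`, i.e. Lebesgue-almost every `y ∈ Ω` lies on the
relative interior of a maximal minimizing segment: there are `t > u(y)`, `x ∈ ∂Ω`
and `z ∈ Ω` with `u(z) = ‖x - z‖ = t` and `y = x + (u(y)/t)(z - x)`. -/
theorem stmt_15 (n : ℕ) (hn : 1 ≤ n)
    (Ω : Set (EuclideanSpace ℝ (Fin (n + 1))))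
    (hΩopen : IsOpen Ω) (hΩne : Ω.Nonempty) (hfr : (frontier Ω).Nonempty)
    (hvol : volume Ω < ⊤)
    (u : EuclideanSpace ℝ (Fin (n + 1)) → ℝ)
    (hu : ∀ y, u y = Metric.infDist y (frontier Ω)) :
    volume (Ω \ {y | ∃ t, u y < t ∧ ∃ x z, x ∈ frontier Ω ∧ z ∈ Ω ∧ u z = t ∧
      ‖x - z‖ = t ∧ y = x + (u y / t) • (z - x)}) = 0 :=
  stmt_15_general n Ω hΩopen hfr u hu
end

section
/- Let Ω be a nonempty open subset of ℝ^{n+1} (n ≥ 1) with nonempty topological boundary ∂Ω, let u(y) = dist(y, ∂Ω), and let 0 < r < s < t. Define g_r on Γ_s^t by g_r(y) = y − r N(y), where N(y) = (z − x)/t = ∇u(y) for the unique configuration (x, z) of y. Then g_r is a bijection from Γ_s^t onto Γ_{s−r}^t; moreover for all y, y′ ∈ Γ_s^t one has ‖y − y′‖ ≤ (s/(s−r)) ‖g_r(y) − g_r(y′)‖. -/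
open RealInnerProductSpace Metric Set


private lemma expand_sq {E : Type*} [NormedAddCommGroup E] [InnerProductSpace ℝ E]
    (a v : E) (σ : ℝ) :
    ‖a + σ • v‖ ^ 2 = ‖a‖ ^ 2 + 2 * σ * ⟪a, v⟫ + σ ^ 2 * ‖v‖ ^ 2 := by
  rw [@norm_add_sq_real, real_inner_smul_right, norm_smul]
  simp only [Real.norm_eq_abs, sq_abs, mul_pow]
  ring

private lemma core_ineq {E : Type*} [NormedAddCommGroup E] [InnerProductSpace ℝ E]
    (a v : E) (r s t : ℝ) (hr : 0 < r) (hrs : r < s) (hst : s < t)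
    (hav : -‖a‖ ^ 2 / t ≤ ⟪a, v⟫) :
    ‖a + s • v‖ ≤ (s / (s - r)) * ‖a + (s - r) • v‖ := by
  have ht : 0 < t := lt_trans (lt_trans hr hrs) hst
  have hsr : 0 < s - r := by linarith
  have h1 := expand_sq a v s
  have h2 := expand_sq a v (s - r)
  have hB : -‖a‖ ^ 2 ≤ t * ⟪a, v⟫ := by
    have := (div_le_iff₀ ht).mp hav
    nlinarith
  have hsq : ‖a + s • v‖ ^ 2 ≤ ((s / (s - r)) * ‖a + (s - r) • v‖) ^ 2 := by
    rw [mul_pow, div_pow, h1, h2]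
    have hA : (0:ℝ) ≤ ‖a‖ ^ 2 := sq_nonneg _
    have hV : (0:ℝ) ≤ ‖v‖ ^ 2 := sq_nonneg _
    rw [div_mul_eq_mul_div, le_div_iff₀ (by positivity)]
    have hs : (0:ℝ) ≤ s := by linarith
    have hint1 := mul_le_mul_of_nonneg_left
      (mul_le_mul_of_nonneg_left hB (mul_nonneg hsr.le hs)) hr.le
    have hint2 : 0 ≤ ‖a‖ ^ 2 * (r * ((2 * s - r) * t - 2 * (s - r) * s)) := by
      apply mul_nonneg hA
      apply mul_nonneg hr.le
      nlinarith
    have key : 0 ≤ ((‖a‖ ^ 2 + 2 * (s - r) * ⟪a, v⟫ + (s - r) ^ 2 * ‖v‖ ^ 2) * s ^ 2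
        - (‖a‖ ^ 2 + 2 * s * ⟪a, v⟫ + s ^ 2 * ‖v‖ ^ 2) * (s - r) ^ 2) * t := by
      nlinarith [hint1, hint2]
    nlinarith [key, ht]
  calc ‖a + s • v‖ = √(‖a + s • v‖ ^ 2) := by rw [Real.sqrt_sq (norm_nonneg _)]
    _ ≤ √(((s / (s - r)) * ‖a + (s - r) • v‖) ^ 2) := Real.sqrt_le_sqrt hsq
    _ = (s / (s - r)) * ‖a + (s - r) • v‖ := Real.sqrt_sq (mul_nonneg (div_nonneg (by linarith) hsr.le) (norm_nonneg _))

private lemma inner_ge {E : Type*} [NormedAddCommGroup E] [InnerProductSpace ℝ E]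
    (a N₁ N₂ : E) (t : ℝ) (ht : 0 < t) (hN₁ : ‖N₁‖ = 1) (hN₂ : ‖N₂‖ = 1)
    (h1 : t ≤ ‖a - t • N₂‖) (h2 : t ≤ ‖-a - t • N₁‖) :
    -‖a‖ ^ 2 / t ≤ ⟪a, N₁ - N₂⟫ := by
  have e1 : ‖a - t • N₂‖ ^ 2 = ‖a‖ ^ 2 + 2 * (-t) * ⟪a, N₂⟫ + t ^ 2 := by
    have := expand_sq a N₂ (-t)
    rw [neg_smul, ← sub_eq_add_neg] at this
    rw [this, hN₂]; ring
  have e2 : ‖-a - t • N₁‖ ^ 2 = ‖a‖ ^ 2 + 2 * t * ⟪a, N₁⟫ + t ^ 2 := by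
    have := expand_sq (-a) N₁ (-t)
    rw [neg_smul, ← sub_eq_add_neg] at this
    rw [this, hN₁, norm_neg, inner_neg_left]; ring
  have q1 : t ^ 2 ≤ ‖a - t • N₂‖ ^ 2 := by nlinarith [norm_nonneg (a - t • N₂)]
  have q2 : t ^ 2 ≤ ‖-a - t • N₁‖ ^ 2 := by nlinarith [norm_nonneg (-a - t • N₁)]
  rw [inner_sub_right, div_le_iff₀ ht]
  nlinarith

/-- For `0 < r < s < t`, the map `g_r(y) = y - r N(y)` is a bijection from `Γ_s^t`
onto `Γ_{s-r}^t`, and `‖y - y'‖ ≤ (s/(s-r)) ‖g_r(y) - g_r(y')‖` for `y, y' ∈ Γ_s^t`. -/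
theorem stmt_16 (n : ℕ) (hn : 1 ≤ n)
    (Ω : Set (EuclideanSpace ℝ (Fin (n + 1))))
    (hΩopen : IsOpen Ω) (hΩne : Ω.Nonempty) (hfr : (frontier Ω).Nonempty)
    (u : EuclideanSpace ℝ (Fin (n + 1)) → ℝ)
    (hu : ∀ y, u y = Metric.infDist y (frontier Ω))
    (r s t : ℝ) (hr : 0 < r) (hrs : r < s) (hst : s < t) :
    -- `g_r` maps `Γ_s^t` into `Γ_{s-r}^t`:
    (∀ y x z : EuclideanSpace ℝ (Fin (n + 1)),
      (x ∈ frontier Ω ∧ z ∈ Ω ∧ u z = t ∧ ‖x - z‖ = t ∧ y = x + (s / t) • (z - x)) →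
      y - r • (t⁻¹ • (z - x)) ∈
        {w | ∃ x' z', x' ∈ frontier Ω ∧ z' ∈ Ω ∧ u z' = t ∧ ‖x' - z'‖ = t ∧
          w = x' + ((s - r) / t) • (z' - x')}) ∧
    -- `g_r` is injective on `Γ_s^t`:
    (∀ y₁ x₁ z₁ y₂ x₂ z₂ : EuclideanSpace ℝ (Fin (n + 1)),
      (x₁ ∈ frontier Ω ∧ z₁ ∈ Ω ∧ u z₁ = t ∧ ‖x₁ - z₁‖ = t ∧
        y₁ = x₁ + (s / t) • (z₁ - x₁)) →
      (x₂ ∈ frontier Ω ∧ z₂ ∈ Ω ∧ u z₂ = t ∧ ‖x₂ - z₂‖ = t ∧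
        y₂ = x₂ + (s / t) • (z₂ - x₂)) →
      y₁ - r • (t⁻¹ • (z₁ - x₁)) = y₂ - r • (t⁻¹ • (z₂ - x₂)) → y₁ = y₂) ∧
    -- `g_r` is surjective onto `Γ_{s-r}^t`:
    (∀ w : EuclideanSpace ℝ (Fin (n + 1)),
      (∃ x' z', x' ∈ frontier Ω ∧ z' ∈ Ω ∧ u z' = t ∧ ‖x' - z'‖ = t ∧
        w = x' + ((s - r) / t) • (z' - x')) →
      ∃ y x z : EuclideanSpace ℝ (Fin (n + 1)),
        (x ∈ frontier Ω ∧ z ∈ Ω ∧ u z = t ∧ ‖x - z‖ = t ∧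
          y = x + (s / t) • (z - x)) ∧ w = y - r • (t⁻¹ • (z - x))) ∧
    -- expansion bound, i.e. `g_r⁻¹` is `(s/(s-r))`-Lipschitz:
    (∀ y₁ x₁ z₁ y₂ x₂ z₂ : EuclideanSpace ℝ (Fin (n + 1)),
      (x₁ ∈ frontier Ω ∧ z₁ ∈ Ω ∧ u z₁ = t ∧ ‖x₁ - z₁‖ = t ∧
        y₁ = x₁ + (s / t) • (z₁ - x₁)) →
      (x₂ ∈ frontier Ω ∧ z₂ ∈ Ω ∧ u z₂ = t ∧ ‖x₂ - z₂‖ = t ∧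
        y₂ = x₂ + (s / t) • (z₂ - x₂)) →
      ‖y₁ - y₂‖ ≤ (s / (s - r)) *
        ‖(y₁ - r • (t⁻¹ • (z₁ - x₁))) - (y₂ - r • (t⁻¹ • (z₂ - x₂)))‖) := by
  have ht0 : (0:ℝ) < t := lt_trans (lt_trans hr hrs) hst
  -- main expansion bound, used twice
  have main : ∀ y₁ x₁ z₁ y₂ x₂ z₂ : EuclideanSpace ℝ (Fin (n + 1)),
      (x₁ ∈ frontier Ω ∧ z₁ ∈ Ω ∧ u z₁ = t ∧ ‖x₁ - z₁‖ = t ∧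
        y₁ = x₁ + (s / t) • (z₁ - x₁)) →
      (x₂ ∈ frontier Ω ∧ z₂ ∈ Ω ∧ u z₂ = t ∧ ‖x₂ - z₂‖ = t ∧
        y₂ = x₂ + (s / t) • (z₂ - x₂)) →
      ‖y₁ - y₂‖ ≤ (s / (s - r)) *
        ‖(y₁ - r • (t⁻¹ • (z₁ - x₁))) - (y₂ - r • (t⁻¹ • (z₂ - x₂)))‖ := by
    rintro y₁ x₁ z₁ y₂ x₂ z₂ ⟨hx₁, hz₁, ht₁, hn₁, hy₁⟩ ⟨hx₂, hz₂, ht₂, hn₂, hy₂⟩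
    set a : EuclideanSpace ℝ (Fin (n + 1)) := x₁ - x₂ with ha
    set N₁ : EuclideanSpace ℝ (Fin (n + 1)) := t⁻¹ • (z₁ - x₁) with hN₁d
    set N₂ : EuclideanSpace ℝ (Fin (n + 1)) := t⁻¹ • (z₂ - x₂) with hN₂d
    have hN₁ : ‖N₁‖ = 1 := by
      rw [hN₁d, norm_smul, Real.norm_eq_abs, abs_of_pos (inv_pos.mpr ht0),
        ← norm_neg, neg_sub, hn₁, inv_mul_cancel₀ ht0.ne']
    have hN₂ : ‖N₂‖ = 1 := by
      rw [hN₂d, norm_smul, Real.norm_eq_abs, abs_of_pos (inv_pos.mpr ht0),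
        ← norm_neg, neg_sub, hn₂, inv_mul_cancel₀ ht0.ne']
    have et2 : a - t • N₂ = x₁ - z₂ := by
      rw [hN₂d, smul_smul, mul_inv_cancel₀ ht0.ne', one_smul, ha]; abel
    have et1 : -a - t • N₁ = x₂ - z₁ := by
      rw [hN₁d, smul_smul, mul_inv_cancel₀ ht0.ne', one_smul, ha]; abel
    have hb2 : t ≤ ‖a - t • N₂‖ := by
      rw [et2]
      have := Metric.infDist_le_dist_of_mem (s := frontier Ω) (x := z₂) hx₁
      rw [← hu z₂, ht₂, dist_eq_norm, ← norm_neg, neg_sub] at this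
      exact this
    have hb1 : t ≤ ‖-a - t • N₁‖ := by
      rw [et1]
      have := Metric.infDist_le_dist_of_mem (s := frontier Ω) (x := z₁) hx₂
      rw [← hu z₁, ht₁, dist_eq_norm, ← norm_neg, neg_sub] at this
      exact this
    have hav := inner_ge a N₁ N₂ t ht0 hN₁ hN₂ hb2 hb1
    have e1 : y₁ - y₂ = a + s • (N₁ - N₂) := by
      rw [hy₁, hy₂, ha, hN₁d, hN₂d]; match_scalars <;> ring
    have e2 : (y₁ - r • N₁) - (y₂ - r • N₂) = a + (s - r) • (N₁ - N₂) := by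
      rw [hy₁, hy₂, ha, hN₁d, hN₂d]; match_scalars <;> ring
    rw [e1, e2]
    exact core_ineq a (N₁ - N₂) r s t hr hrs hst hav
  refine ⟨?_, ?_, ?_, main⟩
  · rintro y x z ⟨hx, hz, huz, hn, hy⟩
    exact ⟨x, z, hx, hz, huz, hn, by rw [hy]; match_scalars <;> ring⟩
  · rintro y₁ x₁ z₁ y₂ x₂ z₂ h₁ h₂ heq
    have := main y₁ x₁ z₁ y₂ x₂ z₂ h₁ h₂
    rw [heq, sub_self, norm_zero, mul_zero] at this
    have : ‖y₁ - y₂‖ = 0 := le_antisymm this (norm_nonneg _)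
    rwa [norm_eq_zero, sub_eq_zero] at this
  · rintro w ⟨x', z', hx, hz, huz, hn, hw⟩
    exact ⟨x' + (s / t) • (z' - x'), x', z', ⟨hx, hz, huz, hn, rfl⟩,
      by rw [hw]; match_scalars <;> ring⟩
end

section
/- Let n ≥ 1 and let κ₁ ≤ κ₂ ≤ … ≤ κₙ be real numbers with κₙ > 0, and set H = κ₁ + … + κₙ. Assume H > 0. Then ∫₀^{1/κₙ} ∏_{i=1}^n (1 − t κᵢ) dt ≤ n / ((n+1) H), and equality holds if and only if κ₁ = κ₂ = … = κₙ (= H/n). -/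
/-!
By AM–GM, for `0 ≤ t ≤ 1/κₙ` the product `∏ (1 - t κᵢ)` is at most `(1 - t c)ⁿ`, where
`c = H / n` is the mean curvature. Integrating `(1 - t c)ⁿ` up to `1/κₙ` gives
`(1 - (1 - c/κₙ)ⁿ⁺¹) / ((n+1) c)`, and `c ≤ κₙ` makes the remainder `(1 - c/κₙ)ⁿ⁺¹` nonnegative,
whence the bound `1 / ((n+1) c) = n / ((n+1) H)`. Equality kills the remainder, so the mean equals
the maximum, which forces all `κᵢ` to be equal.
-/

open Finset

theorem Real.prod_le_mean_pow {ι : Type*} (s : Finset ι) (z : ι → ℝ) (hz : ∀ i ∈ s, 0 ≤ z i) :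
    ∏ i ∈ s, z i ≤ ((∑ i ∈ s, z i) / #s) ^ #s := by
  rcases s.eq_empty_or_nonempty with rfl | hs
  · simp
  have hamgm := Real.geom_mean_le_arith_mean s (fun _ ↦ 1) z (fun _ _ ↦ zero_le_one)
    (by simpa using hs) hz
  simp only [Real.rpow_one, sum_const, nsmul_eq_mul, mul_one, one_mul] at hamgm
  calc ∏ i ∈ s, z i = ((∏ i ∈ s, z i) ^ ((#s : ℝ)⁻¹)) ^ #s :=
        (Real.rpow_inv_natCast_pow (prod_nonneg hz) hs.card_pos.ne').symm
    _ ≤ _ := pow_le_pow_left₀ (Real.rpow_nonneg (prod_nonneg hz) _) hamgm _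

theorem integral_one_sub_mul_pow (n : ℕ) {c : ℝ} (hc : c ≠ 0) (a : ℝ) :
    ∫ t in (0 : ℝ)..a, (1 - t * c) ^ n = (1 - (1 - a * c) ^ (n + 1)) / ((n + 1) * c) := by
  simp_rw [mul_comm _ c]
  rw [intervalIntegral.integral_comp_sub_mul (fun x ↦ x ^ n) hc, integral_pow, smul_eq_mul,
    mul_zero, sub_zero, one_pow]
  field_simp

section Curvatures

variable {ι : Type*} [Fintype ι] [Nonempty ι] {κ : ι → ℝ} {M : ℝ}

local notation "N" => (Fintype.card ι : ℝ)

lemma mean_le_of_forall_le (hM : ∀ i, κ i ≤ M) : (∑ i, κ i) / N ≤ M := by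
  rw [div_le_iff₀ (by positivity)]
  simpa [mul_comm] using sum_le_sum fun i (_ : i ∈ univ) ↦ hM i

lemma forall_eq_of_mean_eq (hM : ∀ i, κ i ≤ M) (hmean : (∑ i, κ i) / N = M) : ∀ i, κ i = M := by
  have hsum : ∑ i, κ i = ∑ _i : ι, M := by
    rw [div_eq_iff (by positivity)] at hmean
    simp [hmean, mul_comm]
  exact fun i ↦ (sum_eq_sum_iff_of_le fun i _ ↦ hM i).1 hsum i (mem_univ i)

lemma prod_one_sub_mul_le_pow_mean (hM : ∀ i, κ i ≤ M) {t : ℝ} (ht : 0 ≤ t) (htM : t * M ≤ 1) :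
    ∏ i, (1 - t * κ i) ≤ (1 - t * ((∑ i, κ i) / N)) ^ Fintype.card ι := by
  have hmean : (∑ i, (1 - t * κ i)) / N = 1 - t * ((∑ i, κ i) / N) := by
    rw [sum_sub_distrib, ← mul_sum]
    field_simp
    simp
  simpa only [card_univ, hmean] using Real.prod_le_mean_pow univ (fun i ↦ 1 - t * κ i)
    fun i _ ↦ by linarith [mul_le_mul_of_nonneg_left (hM i) ht]

lemma integral_prod_one_sub_mul_le_pow_mean (hM : ∀ i, κ i ≤ M) (hH : 0 < ∑ i, κ i) :
    ∫ t in (0 : ℝ)..M⁻¹, ∏ i, (1 - t * κ i) ≤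
      (1 - (1 - M⁻¹ * ((∑ i, κ i) / N)) ^ (Fintype.card ι + 1)) / ((N + 1) * ((∑ i, κ i) / N)) := by
  set c := (∑ i, κ i) / N
  have hc : 0 < c := by positivity
  have hM0 : 0 < M := hc.trans_le (mean_le_of_forall_le hM)
  rw [← integral_one_sub_mul_pow _ hc.ne']
  refine intervalIntegral.integral_mono_on (by positivity)
    (Continuous.intervalIntegrable (by fun_prop) _ _)
    (Continuous.intervalIntegrable (by fun_prop) _ _)
    fun t ht ↦ prod_one_sub_mul_le_pow_mean hM ht.1 ?_
  rw [← le_div_iff₀ hM0, one_div]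
  exact ht.2

theorem integral_prod_one_sub_mul_le_and_eq_iff (hM : ∀ i, κ i ≤ M) (hH : 0 < ∑ i, κ i) :
    ∫ t in (0 : ℝ)..M⁻¹, ∏ i, (1 - t * κ i) ≤ N / ((N + 1) * ∑ i, κ i) ∧
      (∫ t in (0 : ℝ)..M⁻¹, ∏ i, (1 - t * κ i) = N / ((N + 1) * ∑ i, κ i) ↔ ∀ i, κ i = M) := by
  set c := (∑ i, κ i) / N with hc_def
  have hc : 0 < c := by positivity
  have hcM : c ≤ M := mean_le_of_forall_le hM
  have hM0 : 0 < M := hc.trans_le hcM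
  have htarget : N / ((N + 1) * ∑ i, κ i) = 1 / ((N + 1) * c) := by
    rw [hc_def]
    field_simp
  have hgap : 0 ≤ 1 - M⁻¹ * c := by
    rw [sub_nonneg, inv_mul_le_iff₀ hM0, mul_one]
    exact hcM
  have hbound := integral_prod_one_sub_mul_le_pow_mean hM hH
  rw [htarget]
  refine ⟨hbound.trans ?_, fun heq ↦ forall_eq_of_mean_eq hM ?_, fun hall ↦ ?_⟩
  · gcongr
    linarith [pow_nonneg hgap (Fintype.card ι + 1)]
  · rw [heq, div_le_div_iff_of_pos_right (by positivity)] at hbound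
    have hzero : (1 - M⁻¹ * c) ^ (Fintype.card ι + 1) = 0 :=
      le_antisymm (by linarith) (pow_nonneg hgap _)
    rw [pow_eq_zero_iff (Nat.succ_ne_zero _), sub_eq_zero, eq_comm,
      inv_mul_eq_one₀ hM0.ne'] at hzero
    exact hzero.symm
  · have hmean : c = M := by simp [hc_def, hall]
    simp only [hall, prod_const, card_univ]
    rw [integral_one_sub_mul_pow _ hM0.ne', ← hmean, inv_mul_cancel₀ hc.ne']
    simp

end Curvatures

/-- The integral inequality of the Montiel–Ros argument: for ordered curvatures
`κ₁ ≤ … ≤ κₙ` with `κₙ > 0` and `H = κ₁ + … + κₙ > 0`,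
`∫₀^{1/κₙ} ∏ᵢ (1 - t κᵢ) dt ≤ n / ((n+1) H)`, with equality iff all `κᵢ` coincide. -/
theorem stmt_19 (n : ℕ) (hn : 1 ≤ n) (κ : Fin n → ℝ) (hmono : Monotone κ)
    (hH : 0 < ∑ i, κ i) :
    (∫ t in (0 : ℝ)..(κ ⟨n - 1, by omega⟩)⁻¹, ∏ i, (1 - t * κ i)) ≤
      n / ((n + 1) * ∑ i, κ i) ∧
    ((∫ t in (0 : ℝ)..(κ ⟨n - 1, by omega⟩)⁻¹, ∏ i, (1 - t * κ i)) =
        n / ((n + 1) * ∑ i, κ i) ↔ ∀ i j, κ i = κ j) := by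
  have : Nonempty (Fin n) := ⟨⟨0, hn⟩⟩
  have hle_last : ∀ i, κ i ≤ κ ⟨n - 1, by omega⟩ :=
    fun i ↦ hmono (Fin.le_def.2 (Nat.le_sub_one_of_lt i.isLt))
  have h := integral_prod_one_sub_mul_le_and_eq_iff hle_last hH
  rw [Fintype.card_fin] at h
  exact ⟨h.1, h.2.trans ⟨fun hall i j ↦ (hall i).trans (hall j).symm, fun hall i ↦ hall i _⟩⟩
end
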